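/- arXiv:1009.3585 — 14 statements merged into one kernel-verified Lean document; each statement's English description precedes it below -/
import Mathlib

section
/- If two vertices i ≠ j of the underlying digraph of a nonnegative square matrix A belong to the same strongly connected component, then they have the same period, i.e., gcd{k > 0 : (A^k)_{i,i} > 0} = gcd{k > 0 : (A^k)_{j,j} > 0}. -/
private lemma pow_nonneg_entry {n : ℕ} (A : Matrix (Fin n) (Fin n) ℝ)
    (hA : ∀ a b, 0 ≤ A a b) (k : ℕ) (hk : 0 < k) : ∀ a b, 0 ≤ (A ^ k) a b := by
  induction k with
  | zero => omega
  | succ m ih =>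
    intro a b
    rcases Nat.eq_zero_or_pos m with hm | hm
    · subst hm; simpa using hA a b
    · rw [pow_succ, Matrix.mul_apply]
      exact Finset.sum_nonneg fun c _ => mul_nonneg (ih hm a c) (hA c b)

private lemma pow_add_pos {n : ℕ} (A : Matrix (Fin n) (Fin n) ℝ)
    (hA : ∀ a b, 0 ≤ A a b) {a b : ℕ} (ha : 0 < a) (hb : 0 < b)
    {x y z : Fin n} (hx : 0 < (A ^ a) x y) (hy : 0 < (A ^ b) y z) :
    0 < (A ^ (a + b)) x z := by
  rw [pow_add, Matrix.mul_apply]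
  apply Finset.sum_pos'
  · intro c _
    exact mul_nonneg (pow_nonneg_entry A hA a ha x c) (pow_nonneg_entry A hA b hb c z)
  · exact ⟨y, Finset.mem_univ y, mul_pos hx hy⟩

/-- The period of a vertex `i` in the underlying digraph of a nonnegative matrix `A`:
the gcd of all positive `k` with `(A^k) i i > 0`, realized as the largest common
divisor of all such `k`. -/
noncomputable def vertexPeriod {n : ℕ} (A : Matrix (Fin n) (Fin n) ℝ) (i : Fin n) : ℕ :=
  sSup {d : ℕ | ∀ k : ℕ, 0 < k → 0 < (A ^ k) i i → d ∣ k}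

/-- If two distinct vertices of the underlying digraph of a nonnegative square matrix
belong to the same strongly connected component, then they have the same period. -/
theorem period_eq_of_same_strong_component {n : ℕ} (A : Matrix (Fin n) (Fin n) ℝ)
    (hA : ∀ a b, 0 ≤ A a b) (i j : Fin n) (hij : i ≠ j)
    (hfwd : ∃ s : ℕ, 0 < s ∧ 0 < (A ^ s) i j)
    (hbwd : ∃ t : ℕ, 0 < t ∧ 0 < (A ^ t) j i) :
    vertexPeriod A i = vertexPeriod A j := by
  obtain ⟨s, hs, hsij⟩ := hfwd
  obtain ⟨t, ht, htji⟩ := hbwd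
  have key : ∀ (x y : Fin n) (a b : ℕ), 0 < a → 0 < b →
      0 < (A ^ a) x y → 0 < (A ^ b) y x →
      {d : ℕ | ∀ k : ℕ, 0 < k → 0 < (A ^ k) x x → d ∣ k} ⊆
      {d : ℕ | ∀ k : ℕ, 0 < k → 0 < (A ^ k) y y → d ∣ k} := by
    intro x y a b ha hb hxy hyx d hd k hk hkyy
    have h1 : 0 < (A ^ (a + b)) x x := pow_add_pos A hA ha hb hxy hyx
    have h2 : 0 < (A ^ (a + (k + b))) x x :=
      pow_add_pos A hA ha (by omega) hxy (pow_add_pos A hA hk hb hkyy hyx)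
    have d1 : d ∣ a + b := hd (a + b) (by omega) h1
    have d2 : d ∣ a + (k + b) := hd (a + (k + b)) (by omega) h2
    have : d ∣ k := by
      have := Nat.dvd_sub d2 d1
      simpa [Nat.add_sub_cancel, show a + (k + b) - (a + b) = k by omega] using this
    exact this
  unfold vertexPeriod
  congr 1
  exact le_antisymm (key i j s t hs ht hsij htji) (key j i t s ht hs htji hsij)
end

section
/- For every nonnegative square matrix A there exist positive integers d and γ such that Bin(A^{t+d}) = Bin(A^t) for all t ≥ γ, where Bin(B) denotes the 0/1 matrix with (Bin B)_{i,j} = 1 iff B_{i,j} > 0. -/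
/-- The binary reduction of a nonnegative matrix: each nonzero entry replaced by `1`. -/
noncomputable def Bin {n : ℕ} (A : Matrix (Fin n) (Fin n) ℝ) : Matrix (Fin n) (Fin n) ℝ :=
  Matrix.of fun i j => if 0 < A i j then 1 else 0

/-- For every nonnegative square matrix `A` there exist positive integers `d` and `γ`
such that `Bin (A^(t+d)) = Bin (A^t)` for all `t ≥ γ`. -/
theorem bin_pow_eventually_periodic {n : ℕ} (A : Matrix (Fin n) (Fin n) ℝ)
    (hA : ∀ a b, 0 ≤ A a b) :
    ∃ d γ : ℕ, 0 < d ∧ 0 < γ ∧ ∀ t : ℕ, γ ≤ t → Bin (A ^ (t + d)) = Bin (A ^ t) := by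
  classical
  -- entries of powers are nonnegative
  have hpow : ∀ t (i j : Fin n), 0 ≤ (A ^ t) i j := by
    intro t
    induction t with
    | zero =>
      intro i j
      rw [pow_zero]
      by_cases h : i = j <;> simp [Matrix.one_apply, h]
    | succ t ih =>
      intro i j
      rw [pow_succ, Matrix.mul_apply]
      exact Finset.sum_nonneg fun k _ => mul_nonneg (ih i k) (hA k j)
  -- positivity pattern
  set P : ℕ → Fin n → Fin n → Bool := fun t i j => decide (0 < (A ^ t) i j) with hP
  have hpos : ∀ t (i j : Fin n),
      0 < (A ^ (t + 1)) i j ↔ ∃ k, 0 < (A ^ t) i k ∧ 0 < A k j := by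
    intro t i j
    rw [pow_succ, Matrix.mul_apply]
    constructor
    · intro h
      by_contra hc
      push_neg at hc
      have hz : ∑ k, (A ^ t) i k * A k j = 0 := by
        apply Finset.sum_eq_zero
        intro k _
        rcases lt_or_eq_of_le (hpow t i k) with h1 | h1
        · have := hc k h1
          have : A k j = 0 := le_antisymm this (hA k j)
          simp [this]
        · simp [← h1]
      rw [hz] at h
      exact lt_irrefl 0 h
    · rintro ⟨k, hk1, hk2⟩
      exact Finset.sum_pos' (fun k _ => mul_nonneg (hpow t i k) (hA k j))
        ⟨k, Finset.mem_univ k, mul_pos hk1 hk2⟩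
  -- the pattern evolves deterministically
  have hstep : ∀ s t, P s = P t → P (s + 1) = P (t + 1) := by
    intro s t h
    funext i j
    simp only [hP, decide_eq_decide]
    rw [hpos, hpos]
    refine exists_congr fun k => and_congr_left' ?_
    have := congrFun (congrFun h i) k
    simpa only [hP, decide_eq_decide] using this
  have hshift : ∀ s t, P s = P t → ∀ m, P (s + m) = P (t + m) := by
    intro s t h m
    induction m with
    | zero => simp only [Nat.add_zero]; exact h
    | succ m ih =>
      have h2 := hstep _ _ ih
      rw [← Nat.add_assoc, ← Nat.add_assoc]
      exact h2
  -- pigeonhole on a finite type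
  obtain ⟨a, b, hab, heq⟩ : ∃ a b : ℕ, a ≠ b ∧ P a = P b :=
    Finite.exists_ne_map_eq_of_infinite P
  wlog hlt : a < b generalizing a b
  · exact this b a hab.symm heq.symm (hab.lt_or_gt.resolve_left hlt)
  refine ⟨b - a, a + 1, Nat.sub_pos_of_lt hlt, Nat.succ_pos a, ?_⟩
  intro t ht
  have ht' : a ≤ t := le_trans (Nat.le_succ a) ht
  obtain ⟨m, rfl⟩ := Nat.exists_eq_add_of_le ht'
  have h1 : P (a + m + (b - a)) = P (a + m) := by
    have hb : a + (b - a) = b := Nat.add_sub_cancel' hlt.le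
    calc P (a + m + (b - a)) = P (b + m) := by rw [add_right_comm, hb]
      _ = P (a + m) := hshift b a heq.symm m
  -- translate pattern equality to Bin equality
  funext i j
  show (if 0 < (A ^ (a + m + (b - a))) i j then (1:ℝ) else 0)
      = (if 0 < (A ^ (a + m)) i j then (1:ℝ) else 0)
  have := congrFun (congrFun h1 i) j
  simp only [hP, decide_eq_decide] at this
  simp [this]
end

section
/- A nonnegative square matrix A is primitive (i.e., some power A^γ has all entries strictly positive) if and only if A is indecomposable and its period equals 1. -/
/-- A nonnegative square matrix is indecomposable (irreducible) if for all `i, j`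
some positive power has positive `(i,j)` entry. -/
def Indecomposable {n : ℕ} (A : Matrix (Fin n) (Fin n) ℝ) : Prop :=
  ∀ i j : Fin n, ∃ t : ℕ, 0 < t ∧ 0 < (A ^ t) i j

lemma key_semigroup (R : Set ℕ) (hpos : ∀ k ∈ R, 0 < k)
    (hadd : ∀ a ∈ R, ∀ b ∈ R, a + b ∈ R)
    (hne : R.Nonempty)
    (hgcd : ∀ d, 2 ≤ d → ∃ k ∈ R, ¬ d ∣ k) :
    ∃ N, ∀ m, N ≤ m → m ∈ R := by
  have hmul : ∀ c, 1 ≤ c → ∀ k ∈ R, c * k ∈ R := by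
    intro c hc
    induction c with
    | zero => omega
    | succ c ih =>
      intro k hk
      rcases Nat.eq_zero_or_pos c with h | h
      · simpa [h] using hk
      · have h1 : c * k ∈ R := ih h k hk
        have h2 : c * k + k ∈ R := hadd _ h1 _ hk
        have : (c + 1) * k = c * k + k := by ring
        rwa [this]
  have done_of_one : (1 : ℕ) ∈ R → ∃ N, ∀ m, N ≤ m → m ∈ R := by
    intro h1
    exact ⟨1, fun m hm => by simpa using hmul m hm 1 h1⟩
  have main : ∀ a b, a ∈ R → b ∈ R → 2 ≤ b → Nat.Coprime a b →
      ∃ N, ∀ m, N ≤ m → m ∈ R := by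
    intro a b haR hbR hb2 hco
    have ha1 : 1 ≤ a := hpos a haR
    refine ⟨a * b, fun m hm => ?_⟩
    haveI : NeZero b := ⟨by omega⟩
    set x := ((m : ZMod b) * ((a : ℕ) : ZMod b)⁻¹).val with hxdef
    have hxlt : x < b := ZMod.val_lt _
    have hcast : ((x : ℕ) : ZMod b) = (m : ZMod b) * ((a : ℕ) : ZMod b)⁻¹ :=
      ZMod.natCast_rightInverse _
    have hmeq : x * a ≡ m [MOD b] := by
      have : ((x * a : ℕ) : ZMod b) = ((m : ℕ) : ZMod b) := by
        push_cast
        rw [hcast, mul_assoc, ← mul_comm ((a : ℕ) : ZMod b) _,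
          ZMod.coe_mul_inv_eq_one a hco, mul_one]
      exact (ZMod.natCast_eq_natCast_iff _ _ _).mp this
    have hlt : x * a < m := by
      have h1 : x * a < b * a := mul_lt_mul_of_pos_right hxlt (show 0 < a by omega)
      have h2 : b * a = a * b := Nat.mul_comm _ _
      exact lt_of_lt_of_le (h2 ▸ h1) hm
    have hdvd : b ∣ m - x * a := (Nat.modEq_iff_dvd' hlt.le).mp hmeq
    obtain ⟨y, hy⟩ := hdvd
    have hmeq2 : m = x * a + b * y := by omega
    have hy1 : 1 ≤ y := by
      rcases Nat.eq_zero_or_pos y with h | h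
      · subst h; simp at hy; omega
      · exact h
    have hby : b * y ∈ R := by
      have := hmul y hy1 b hbR
      rwa [mul_comm] at this
    rcases Nat.eq_zero_or_pos x with hx | hx
    · rw [hmeq2, hx]; simpa using hby
    · have hxa : x * a ∈ R := hmul x hx a haR
      rw [hmeq2]; exact hadd _ hxa _ hby
  obtain ⟨a, haR⟩ := hne
  have ha1 : 1 ≤ a := hpos a haR
  rcases eq_or_lt_of_le ha1 with h1 | ha2
  · exact done_of_one (h1 ▸ haR)
  · have hch : ∀ p : ℕ, ∃ k, 2 ≤ p → k ∈ R ∧ ¬ p ∣ k := by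
      intro p
      by_cases hp : 2 ≤ p
      · obtain ⟨k, hk1, hk2⟩ := hgcd p hp; exact ⟨k, fun _ => ⟨hk1, hk2⟩⟩
      · exact ⟨0, fun h => absurd h hp⟩
    choose k hk using hch
    set F := a.primeFactors with hF
    have hFne : F.Nonempty := Nat.nonempty_primeFactors.mpr (by omega)
    set f : ℕ → ℕ := fun p => (∏ q ∈ F.erase p, q) * k p with hf
    set b := ∑ p ∈ F, f p with hb
    have hsum : ∀ (s : Finset ℕ), s.Nonempty → (∀ p ∈ s, f p ∈ R) → ∑ p ∈ s, f p ∈ R := by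
      intro s hs
      induction hs using Finset.Nonempty.cons_induction with
      | singleton a => intro h; simpa using h a (by simp)
      | cons a s ha hs ih =>
        intro h
        rw [Finset.sum_cons]
        exact hadd _ (h a (by simp)) _ (ih fun p hp => h p (by simp [hp]))
    have hterm : ∀ p ∈ F, f p ∈ R := by
      intro p hp
      have hp2 : 2 ≤ p := (Nat.prime_of_mem_primeFactors hp).two_le
      have hkp := hk p hp2
      have hprod : 1 ≤ ∏ q ∈ F.erase p, q := by
        apply Nat.one_le_iff_ne_zero.mpr
        apply Finset.prod_ne_zero_iff.mpr
        intro q hq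
        exact (Nat.prime_of_mem_primeFactors (Finset.mem_of_mem_erase hq)).pos.ne'
      exact hmul _ hprod _ hkp.1
    have hbR : b ∈ R := hsum F hFne hterm
    have hco : Nat.Coprime a b := by
      by_contra hg
      obtain ⟨p, hp, hpg⟩ := Nat.exists_prime_and_dvd hg
      have hpa : p ∣ a := hpg.trans (Nat.gcd_dvd_left _ _)
      have hpb : p ∣ b := hpg.trans (Nat.gcd_dvd_right _ _)
      have hpF : p ∈ F := Nat.mem_primeFactors.mpr ⟨hp, hpa, by omega⟩
      have hrest : p ∣ ∑ q ∈ F.erase p, f q := by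
        apply Finset.dvd_sum
        intro q hq
        have hqne : q ≠ p := (Finset.mem_erase.mp hq).1
        have hmem : p ∈ F.erase q := Finset.mem_erase.mpr ⟨hqne.symm, hpF⟩
        exact Dvd.dvd.mul_right (Finset.dvd_prod_of_mem _ hmem) _
      have hsplit : f p + ∑ q ∈ F.erase p, f q = b := Finset.add_sum_erase F f hpF
      have hpt : ¬ p ∣ f p := by
        intro hd
        rcases (Nat.Prime.dvd_mul hp).mp hd with h | h
        · obtain ⟨q, hq, hpq⟩ := (hp.prime.dvd_finset_prod_iff _).mp h
          have hq' := Nat.prime_of_mem_primeFactors (Finset.mem_of_mem_erase hq)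
          have : p = q := (Nat.prime_dvd_prime_iff_eq hp hq').mp hpq
          exact (Finset.mem_erase.mp hq).1 this.symm
        · exact (hk p hp.two_le).2 h
      apply hpt
      have : p ∣ f p + ∑ q ∈ F.erase p, f q := hsplit ▸ hpb
      exact (Nat.dvd_add_right hrest).mp (by rwa [Nat.add_comm] at this)
    have hb1 : 1 ≤ b := hpos b hbR
    rcases eq_or_lt_of_le hb1 with hb' | hb2
    · exact done_of_one (hb' ▸ hbR)
    · exact main a b haR hbR hb2 hco


lemma pow_entry_nonneg {n : ℕ} (A : Matrix (Fin n) (Fin n) ℝ) (hA : ∀ a b, 0 ≤ A a b) :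
    ∀ (k : ℕ) (a b : Fin n), 0 ≤ (A ^ k) a b := by
  intro k
  induction k with
  | zero =>
    intro a b
    rw [pow_zero]
    by_cases h : a = b <;> simp [Matrix.one_apply, h]
  | succ k ih =>
    intro a b
    rw [pow_succ, Matrix.mul_apply]
    exact Finset.sum_nonneg fun c _ => mul_nonneg (ih a c) (hA c b)

lemma pow_entry_le {n : ℕ} (A : Matrix (Fin n) (Fin n) ℝ) (hA : ∀ a b, 0 ≤ A a b)
    (s t : ℕ) (i x j : Fin n) :
    (A ^ s) i x * (A ^ t) x j ≤ (A ^ (s + t)) i j := by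
  rw [pow_add, Matrix.mul_apply]
  exact Finset.single_le_sum
    (fun c _ => mul_nonneg (pow_entry_nonneg A hA s i c) (pow_entry_nonneg A hA t c j))
    (Finset.mem_univ x)

lemma eventually_return {n : ℕ} (A : Matrix (Fin n) (Fin n) ℝ) (hA : ∀ a b, 0 ≤ A a b)
    (hind : Indecomposable A) (i : Fin n) (hp : vertexPeriod A i = 1) :
    ∃ N, ∀ m, N ≤ m → 0 < (A ^ m) i i := by
  have hS : ∀ d, (∀ k, 0 < k → 0 < (A ^ k) i i → d ∣ k) → d ≤ 1 := by
    intro d hd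
    by_cases hb : BddAbove {d : ℕ | ∀ k : ℕ, 0 < k → 0 < (A ^ k) i i → d ∣ k}
    · have := le_csSup hb (show d ∈ _ from hd)
      rwa [← vertexPeriod, hp] at this
    · have h0 : vertexPeriod A i = 0 := by
        rw [vertexPeriod, csSup_of_not_bddAbove hb, csSup_empty]
        rfl
      rw [hp] at h0
      omega
  obtain ⟨N, hN⟩ := key_semigroup {k : ℕ | 0 < k ∧ 0 < (A ^ k) i i}
    (fun k hk => hk.1)
    (by
      intro a ha b hb
      obtain ⟨ha1, ha2⟩ := ha
      obtain ⟨hb1, hb2⟩ := hb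
      refine ⟨by omega, ?_⟩
      have h1 : (A ^ a) i i * (A ^ b) i i ≤ (A ^ (a + b)) i i := pow_entry_le A hA a b i i i
      have := mul_pos ha2 hb2
      linarith)
    (by
      obtain ⟨t, ht, htp⟩ := hind i i
      exact ⟨t, ht, htp⟩)
    (by
      intro d hd
      by_contra h
      push_neg at h
      have hall : ∀ k, 0 < k → 0 < (A ^ k) i i → d ∣ k := by
        intro k hk hk2
        exact h k ⟨hk, hk2⟩
      have := hS d hall
      omega)
  exact ⟨N + 1, fun m hm => (hN m (by omega)).2⟩

/-- A nonnegative square matrix is primitive (some power has all entries strictly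
positive) if and only if it is indecomposable and its period equals `1`. -/
theorem primitive_iff_indecomposable_and_aperiodic {n : ℕ}
    (A : Matrix (Fin n) (Fin n) ℝ) (hA : ∀ a b, 0 ≤ A a b) :
    (∃ γ : ℕ, 0 < γ ∧ ∀ i j : Fin n, 0 < (A ^ γ) i j) ↔
      (Indecomposable A ∧ ∀ i : Fin n, vertexPeriod A i = 1) := by
  constructor
  · rintro ⟨γ, hγ, hposγ⟩
    have hind : Indecomposable A := fun i j => ⟨γ, hγ, hposγ i j⟩
    refine ⟨hind, fun i => ?_⟩
    have hii : 0 < (A ^ γ) i i := hposγ i i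
    obtain ⟨c, hAc⟩ : ∃ c, 0 < A i c := by
      have h1 : 0 < (A ^ (1 + (γ - 1))) i i := by
        rw [show 1 + (γ - 1) = γ by omega]; exact hii
      rw [pow_add, pow_one, Matrix.mul_apply] at h1
      have h2 : ∑ c : Fin n, (0 : ℝ) < ∑ c : Fin n, A i c * (A ^ (γ - 1)) c i := by
        simpa using h1
      obtain ⟨c, -, hc⟩ := Finset.exists_lt_of_sum_lt h2
      refine ⟨c, ?_⟩
      rcases mul_pos_iff.mp hc with ⟨h, -⟩ | ⟨h, -⟩
      · exact h
      · exact absurd h (not_lt.mpr (hA i c))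
    have hsucc : 0 < (A ^ (γ + 1)) i i := by
      have h1 : (A ^ 1) i c * (A ^ γ) c i ≤ (A ^ (1 + γ)) i i := pow_entry_le A hA 1 γ i c i
      rw [pow_one] at h1
      have := mul_pos hAc (hposγ c i)
      rw [show γ + 1 = 1 + γ by omega]
      linarith
    have hset : {d : ℕ | ∀ k : ℕ, 0 < k → 0 < (A ^ k) i i → d ∣ k} = {1} := by
      ext d
      simp only [Set.mem_setOf_eq, Set.mem_singleton_iff]
      constructor
      · intro hd
        have h1 : d ∣ γ := hd γ hγ hii
        have h2 : d ∣ γ + 1 := hd (γ + 1) (by omega) hsucc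
        have h3 : d ∣ 1 := by simpa using Nat.dvd_sub h2 h1
        exact Nat.dvd_one.mp h3
      · rintro rfl
        exact fun k _ _ => one_dvd k
    rw [vertexPeriod, hset, csSup_singleton]
  · rintro ⟨hind, hper⟩
    choose N hN using fun i => eventually_return A hA hind i (hper i)
    choose t ht hpost using fun i j => hind i j
    refine ⟨(∑ i, N i) + (∑ p : Fin n × Fin n, t p.1 p.2) + 1, by omega, fun i j => ?_⟩
    set γ := (∑ i, N i) + (∑ p : Fin n × Fin n, t p.1 p.2) + 1 with hγdef
    have h1 : t i j ≤ ∑ p : Fin n × Fin n, t p.1 p.2 :=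
      Finset.single_le_sum (f := fun p : Fin n × Fin n => t p.1 p.2)
        (fun _ _ => Nat.zero_le _) (Finset.mem_univ (i, j))
    have h2 : N i ≤ ∑ i, N i :=
      Finset.single_le_sum (fun _ _ => Nat.zero_le _) (Finset.mem_univ i)
    set m := γ - t i j with hmdef
    have hmN : N i ≤ m := by omega
    have hγeq : γ = m + t i j := by omega
    have hle : (A ^ m) i i * (A ^ (t i j)) i j ≤ (A ^ (m + t i j)) i j :=
      pow_entry_le A hA m (t i j) i i j
    have hpos : 0 < (A ^ m) i i * (A ^ (t i j)) i j := mul_pos (hN i m hmN) (hpost i j)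
    rw [hγeq]
    linarith
end

section
/- Let P be the level poset of a strongly connected digraph G. The Hasse diagram of P, considered as an undirected graph, is connected if and only if G is aperiodic (its adjacency matrix is primitive). -/
/-- The cover relation of the level poset of a (binary) adjacency matrix `M`. -/
def levelCover {V : Type*} (M : Matrix V V ℕ) (p q : V × ℤ) : Prop :=
  q.2 = p.2 + 1 ∧ 0 < M p.1 q.1

/-- The Hasse diagram of the level poset of `M`, viewed as an undirected graph on
`V × ℤ` whose edges are the cover relations. -/
def hasseGraph {V : Type*} (M : Matrix V V ℕ) : SimpleGraph (V × ℤ) where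
  Adj p q := levelCover M p q ∨ levelCover M q p
  symm := ⟨fun p q h => h.symm⟩
  loopless := ⟨by rintro p (⟨h, -⟩ | ⟨h, -⟩) <;> omega⟩

section Aux

variable {V : Type*} [Fintype V] [DecidableEq V]

lemma hasse_adj (M : Matrix V V ℕ) (p q : V × ℤ) :
    (hasseGraph M).Adj p q ↔ levelCover M p q ∨ levelCover M q p := Iff.rfl

lemma entry_mul_pos (A B : Matrix V V ℕ) {u w : V} (v : V)
    (h1 : 0 < A u v) (h2 : 0 < B v w) : 0 < (A * B) u w := by
  rw [Matrix.mul_apply]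
  exact lt_of_lt_of_le (Nat.mul_pos h1 h2)
    (Finset.single_le_sum (f := fun j => A u j * B j w)
      (fun i _ => Nat.zero_le _) (Finset.mem_univ v))

lemma entry_pow_add_pos (M : Matrix V V ℕ) {s t : ℕ} {u w : V} (v : V)
    (h1 : 0 < (M ^ s) u v) (h2 : 0 < (M ^ t) v w) : 0 < (M ^ (s + t)) u w := by
  rw [pow_add]; exact entry_mul_pos _ _ v h1 h2

lemma entry_mul_exists (A B : Matrix V V ℕ) {u w : V} (h : 0 < (A * B) u w) :
    ∃ v, 0 < A u v ∧ 0 < B v w := by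
  by_contra hc
  push_neg at hc
  rw [Matrix.mul_apply] at h
  have : ∑ v, A u v * B v w = 0 := Finset.sum_eq_zero fun v _ => by
    rcases Nat.eq_zero_or_pos (A u v) with h0 | h0
    · rw [h0, Nat.zero_mul]
    · rw [Nat.le_zero.mp (hc v h0), Nat.mul_zero]
  omega

lemma reach_up (M : Matrix V V ℕ) :
    ∀ (t : ℕ) (u v : V) (i : ℤ), 0 < (M ^ t) u v →
      (hasseGraph M).Reachable (u, i) (v, i + t) := by
  intro t
  induction t with
  | zero =>
    intro u v i h
    rw [pow_zero, Matrix.one_apply] at h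
    by_cases huv : u = v
    · subst huv
      simp only [Nat.cast_zero, add_zero]
      exact SimpleGraph.Reachable.refl _
    · simp [huv] at h
  | succ t ih =>
    intro u v i h
    rw [pow_succ'] at h
    obtain ⟨w, hw1, hw2⟩ := entry_mul_exists _ _ h
    have hadj : (hasseGraph M).Adj (u, i) (w, i + 1) :=
      Or.inl ⟨rfl, hw1⟩
    have hr := ih w v (i + 1) hw2
    have hcast : (i + 1) + (t : ℤ) = i + ((t : ℕ) + 1 : ℕ) := by push_cast; ring
    rw [hcast] at hr
    exact hadj.reachable.trans hr

end Aux

/-- For the level poset of a strongly connected digraph `G` with adjacency matrix `M`,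
the Hasse diagram is connected iff `G` is aperiodic, i.e. `M` is primitive. -/
theorem hasse_connected_iff_primitive {V : Type*} [Fintype V] [DecidableEq V] [Nonempty V]
    (M : Matrix V V ℕ) (hbin : ∀ u v, M u v ≤ 1)
    (hsc : ∀ u v : V, ∃ t : ℕ, 0 < t ∧ 0 < (M ^ t) u v) :
    (hasseGraph M).Connected ↔ ∃ γ : ℕ, 0 < γ ∧ ∀ u v : V, 0 < (M ^ γ) u v := by
  classical
  obtain ⟨u0⟩ := ‹Nonempty V›
  -- walk-length choice functions
  set f : V → ℕ := fun u => (hsc u u0).choose with hfdef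
  have hfp : ∀ u, 0 < (M ^ f u) u u0 := fun u => (hsc u u0).choose_spec.2
  set g : V → ℕ := fun v => (hsc u0 v).choose with hgdef
  have hgp : ∀ v, 0 < (M ^ g v) u0 v := fun v => (hsc u0 v).choose_spec.2
  -- the set of closed walk lengths at u0
  set S : Set ℕ := {t | 0 < (M ^ t) u0 u0} with hSdef
  have hS0 : (0 : ℕ) ∈ S := by
    simp only [hSdef, Set.mem_setOf_eq, pow_zero, Matrix.one_apply_eq]
    omega
  have hSadd : ∀ {a b : ℕ}, a ∈ S → b ∈ S → a + b ∈ S := by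
    intro a b ha hb
    exact entry_pow_add_pos M u0 ha hb
  have hSmul : ∀ (k : ℕ) {a : ℕ}, a ∈ S → k * a ∈ S := by
    intro k
    induction k with
    | zero => intro a _; simpa using hS0
    | succ k ih =>
      intro a ha
      have := hSadd (ih ha) ha
      rwa [show (k + 1) * a = k * a + a by ring]
  constructor
  · intro hconn
    -- H : subgroup of ℤ generated by closed walk lengths
    set Sz : Set ℤ := (fun n : ℕ => (n : ℤ)) '' S with hSzdef
    set H : AddSubgroup ℤ := AddSubgroup.closure Sz with hHdef
    have hmemS : ∀ {a : ℕ}, a ∈ S → (a : ℤ) ∈ H := by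
      intro a ha
      exact AddSubgroup.subset_closure ⟨a, ha, rfl⟩
    -- two walks from u0 to the same vertex have lengths congruent mod H
    have htwo : ∀ (v : V) (l1 l2 : ℕ), 0 < (M ^ l1) u0 v → 0 < (M ^ l2) u0 v →
        (l1 : ℤ) - l2 ∈ H := by
      intro v l1 l2 h1 h2
      obtain ⟨m, -, hm⟩ := hsc v u0
      have hA : (l1 + m : ℕ) ∈ S := entry_pow_add_pos M v h1 hm
      have hB : (l2 + m : ℕ) ∈ S := entry_pow_add_pos M v h2 hm
      have := sub_mem (hmemS hA) (hmemS hB)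
      push_cast at this ⊢
      convert this using 1
      ring
    -- edge relation
    have hedge : ∀ x y : V, 0 < M x y → (g y : ℤ) - g x - 1 ∈ H := by
      intro x y hxy
      have h1 : 0 < (M ^ (g x + 1)) u0 y := by
        have : 0 < (M ^ 1) x y := by rwa [pow_one]
        exact entry_pow_add_pos M x (hgp x) this
      have := htwo y (g y) (g x + 1) (hgp y) h1
      push_cast at this ⊢
      convert this using 1
      ring
    -- the invariant along Hasse walks
    have hinv : ∀ p q : V × ℤ, (hasseGraph M).Walk p q →
        ((g p.1 : ℤ) - p.2) - ((g q.1 : ℤ) - q.2) ∈ H := by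
      intro p q w
      induction w with
      | nil => simpa using zero_mem H
      | @cons p r q h w ih =>
        have hstep : ((g p.1 : ℤ) - p.2) - ((g r.1 : ℤ) - r.2) ∈ H := by
          rcases h with ⟨hl, hpos⟩ | ⟨hl, hpos⟩
          · have := hedge p.1 r.1 hpos
            rw [hl]
            convert neg_mem this using 1
            ring
          · have := hedge r.1 p.1 hpos
            rw [hl]
            convert this using 1
            ring
        have := add_mem hstep ih
        convert this using 1
        ring
    -- connectivity gives 1 ∈ H
    have h1H : (1 : ℤ) ∈ H := by
      obtain ⟨w⟩ := hconn.preconnected (u0, (0 : ℤ)) (u0, (1 : ℤ))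
      have := hinv _ _ w
      simpa using this
    -- every element of H is a difference of elements of S
    have hdiff : ∀ z ∈ H, ∃ a b : ℕ, a ∈ S ∧ b ∈ S ∧ z = (a : ℤ) - b := by
      intro z hz
      induction hz using AddSubgroup.closure_induction with
      | mem x hx =>
        obtain ⟨a, ha, rfl⟩ := hx
        exact ⟨a, 0, ha, hS0, by simp⟩
      | zero => exact ⟨0, 0, hS0, hS0, by simp⟩
      | add x y hx hy ihx ihy =>
        obtain ⟨a, b, ha, hb, rfl⟩ := ihx
        obtain ⟨c, d, hc, hd, rfl⟩ := ihy
        exact ⟨a + c, b + d, hSadd ha hc, hSadd hb hd, by push_cast; ring⟩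
      | neg x hx ihx =>
        obtain ⟨a, b, ha, hb, rfl⟩ := ihx
        exact ⟨b, a, hb, ha, by push_cast; ring⟩
    obtain ⟨a, b, haS, hbS, hab⟩ := hdiff 1 h1H
    have hab' : a = b + 1 := by omega
    -- all m ≥ b*b are in S
    have hN : ∀ m : ℕ, b * b ≤ m → m ∈ S := by
      intro m hm
      rcases Nat.eq_zero_or_pos b with hb0 | hb0
      · subst hb0
        have : a = 1 := by omega
        subst this
        have := hSmul m haS
        rwa [Nat.mul_one] at this
      · set q := m / b with hq
        set r := m % b with hr
        have hqr : m = q * b + r := by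
          rw [hq, hr, Nat.mul_comm]; exact (Nat.div_add_mod m b).symm
        have hrb : r < b := Nat.mod_lt _ hb0
        have hqb : b ≤ q := by
          rw [hq]
          exact Nat.le_div_iff_mul_le hb0 |>.mpr (by nlinarith)
        have hqr' : r ≤ q := by omega
        set c := q - r with hc
        have hqc : q = c + r := by omega
        have hm' : m = c * b + r * a := by
          rw [hab']
          rw [hqc] at hqr
          rw [hqr]
          ring
        rw [hm']
        exact hSadd (hSmul c hbS) (hSmul r haS)
    -- assemble γ
    set A := Finset.univ.sup f with hA
    set B := Finset.univ.sup g with hB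
    refine ⟨b * b + A + B + 1, by omega, fun u v => ?_⟩
    have hfu : f u ≤ A := Finset.le_sup (Finset.mem_univ u)
    have hgv : g v ≤ B := Finset.le_sup (Finset.mem_univ v)
    have hsplit : b * b + A + B + 1 = f u + ((b * b + A + B + 1 - f u - g v) + g v) := by
      omega
    rw [hsplit]
    refine entry_pow_add_pos M u0 (hfp u) (entry_pow_add_pos M u0 ?_ (hgp v))
    exact hN _ (by omega)
  · rintro ⟨γ, hγ, hprim⟩
    -- M^(γ+1) is also all positive
    have hprim1 : ∀ u v : V, 0 < (M ^ (γ + 1)) u v := by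
      intro u v
      obtain ⟨t, ht, htv⟩ := hsc u v
      obtain ⟨t', rfl⟩ : ∃ t', t = t' + 1 := ⟨t - 1, by omega⟩
      rw [pow_succ] at htv
      obtain ⟨w, -, hw2⟩ := entry_mul_exists _ _ htv
      rw [pow_succ]
      exact entry_mul_pos _ _ w (hprim u w) hw2
    -- all t ≥ γ*γ give positive powers
    have hbig : ∀ t : ℕ, γ * γ ≤ t → ∀ u v : V, 0 < (M ^ t) u v := by
      intro t ht u v
      set q := t / γ with hq
      set r := t % γ with hr
      have hqr : t = q * γ + r := by
        rw [hq, hr, Nat.mul_comm]; exact (Nat.div_add_mod t γ).symm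
      have hrγ : r < γ := Nat.mod_lt _ hγ
      have hqγ : γ ≤ q := by
        rw [hq]
        exact Nat.le_div_iff_mul_le hγ |>.mpr (by nlinarith)
      have hqr' : r ≤ q := by omega
      have hsplit : t = (q - r) * γ + r * (γ + 1) := by
        have : q = (q - r) + r := by omega
        rw [this] at hqr
        rw [hqr]; ring
      -- positivity of (M^(kγ)) when k ≥ 1, etc.
      have hmulpos : ∀ (k s : ℕ), (∀ u v : V, 0 < (M ^ s) u v) → 0 < k →
          ∀ u v : V, 0 < (M ^ (k * s)) u v := by
        intro k
        induction k with
        | zero => intro s _ h0; omega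
        | succ k ih =>
          intro s hs _ u v
          rcases Nat.eq_zero_or_pos k with hk0 | hk0
          · subst hk0; simpa using hs u v
          · rw [show (k + 1) * s = k * s + s by ring]
            exact entry_pow_add_pos M u (ih s hs hk0 u u) (hs u v)
      rcases Nat.eq_zero_or_pos r with hr0 | hr0
      · have hqpos : 0 < q - r := by omega
        rw [hsplit, hr0]
        simp only [Nat.sub_zero, Nat.zero_mul, Nat.add_zero]
        exact hmulpos q γ hprim (by omega) u v
      · rcases Nat.eq_zero_or_pos (q - r) with hc0 | hc0
        · rw [hsplit, hc0]
          simp only [Nat.zero_mul, Nat.zero_add]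
          exact hmulpos _ _ hprim1 hr0 u v
        · rw [hsplit]
          exact entry_pow_add_pos M u (hmulpos _ _ hprim hc0 u u)
            (hmulpos _ _ hprim1 hr0 u v)
    -- connectivity
    have hpre : (hasseGraph M).Preconnected := by
      rintro ⟨u, i⟩ ⟨v, j⟩
      set L : ℤ := max i j + (γ * γ : ℕ) with hL
      have hi : ((L - i).toNat : ℤ) = L - i := by
        rw [Int.toNat_of_nonneg]
        have : i ≤ max i j := le_max_left _ _
        omega
      have hj : ((L - j).toNat : ℤ) = L - j := by
        rw [Int.toNat_of_nonneg]
        have : j ≤ max i j := le_max_right _ _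
        omega
      have hti : γ * γ ≤ (L - i).toNat := by
        have : i ≤ max i j := le_max_left _ _
        omega
      have htj : γ * γ ≤ (L - j).toNat := by
        have : j ≤ max i j := le_max_right _ _
        omega
      have r1 : (hasseGraph M).Reachable (u, i) (v, i + (L - i).toNat) :=
        reach_up M _ u v i (hbig _ hti u v)
      have r2 : (hasseGraph M).Reachable (v, j) (v, j + (L - j).toNat) :=
        reach_up M _ v v j (hbig _ htj v v)
      have e1 : i + ((L - i).toNat : ℤ) = L := by omega
      have e2 : j + ((L - j).toNat : ℤ) = L := by omega
      rw [e1] at r1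
      rw [e2] at r2
      exact r1.trans r2.symm
    exact ⟨hpre⟩
end

section
/- Let P be a level poset with underlying adjacency matrix M on a vertex set V of size n, and let S ⊆ {1,...,m−1} correspond to the composition (α_1,...,α_r) of m. Then the matrix F_S whose (u,v) entry is the flag f-vector entry f_S([(u,0),(v,m)]) (and 0 if (u,0) ≰ (v,m)) equals the product Bin(M^{α_1})·Bin(M^{α_2})···Bin(M^{α_r}). -/
/-- The binary reduction of a nonnegative integer matrix. -/
def BinN {V : Type*} (A : Matrix V V ℕ) : Matrix V V ℕ :=
  Matrix.of fun i j => if 0 < A i j then 1 else 0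

lemma chain_count {V : Type*} [Fintype V] [DecidableEq V] :
    ∀ (r : ℕ) (B : Fin r → Matrix V V ℕ), (∀ i x y, B i x y ≤ 1) → ∀ u v : V,
    (List.ofFn B).prod u v =
      (Finset.univ.filter fun c : Fin (r + 1) → V =>
        c 0 = u ∧ c (Fin.last r) = v ∧
        ∀ i : Fin r, 0 < B i (c i.castSucc) (c i.succ)).card := by
  intro r
  induction r with
  | zero =>
    intro B _ u v
    simp only [List.ofFn_zero, List.prod_nil]
    by_cases h : u = v
    · subst h
      have : (Finset.univ.filter fun c : Fin 1 → V =>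
          c 0 = u ∧ c (Fin.last 0) = u ∧
          ∀ i : Fin 0, 0 < B i (c i.castSucc) (c i.succ)) = {fun _ => u} := by
        ext c
        simp only [Finset.mem_filter, Finset.mem_univ, true_and, Finset.mem_singleton]
        constructor
        · rintro ⟨h1, -, -⟩
          funext i
          rw [Subsingleton.elim i 0, h1]
        · rintro rfl
          exact ⟨rfl, rfl, fun i => i.elim0⟩
      rw [this, Finset.card_singleton, Matrix.one_apply_eq]
    · have : (Finset.univ.filter fun c : Fin 1 → V =>
          c 0 = u ∧ c (Fin.last 0) = v ∧
          ∀ i : Fin 0, 0 < B i (c i.castSucc) (c i.succ)) = ∅ := by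
        ext c
        simp only [Finset.mem_filter, Finset.notMem_empty, iff_false]
        rintro ⟨-, h1, h2, -⟩
        exact h (h1 ▸ h2)
      rw [this, Finset.card_empty, Matrix.one_apply_ne h]
  | succ r ih =>
    intro B hB u v
    rw [List.ofFn_succ, List.prod_cons, Matrix.mul_apply]
    rw [Finset.card_eq_sum_card_fiberwise (f := fun c : Fin (r + 2) → V => c 1)
      (t := Finset.univ) (fun x _ => Finset.mem_univ _)]
    refine Finset.sum_congr rfl fun w _ => ?_
    rw [ih (fun i => B i.succ) (fun i x y => hB i.succ x y) w v]
    rw [Finset.filter_filter]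
    by_cases hw : 0 < B 0 u w
    · have hB1 : B 0 u w = 1 := le_antisymm (hB 0 u w) hw
      rw [hB1, one_mul]
      symm
      apply Finset.card_bij (fun c _ => c ∘ Fin.succ)
      · rintro c hc
        simp only [Finset.mem_filter, Finset.mem_univ, true_and] at hc ⊢
        obtain ⟨⟨h0, hl, hP⟩, h1⟩ := hc
        refine ⟨?_, ?_, ?_⟩
        · simpa using h1
        · show c (Fin.last r).succ = v
          rwa [Fin.succ_last]
        · intro j
          have := hP j.succ
          rwa [← Fin.succ_castSucc] at this
          -- goal: 0 < B j.succ (c j.castSucc.succ) (c j.succ.succ)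
      · rintro c1 hc1 c2 hc2 h
        simp only [Finset.mem_filter, Finset.mem_univ, true_and] at hc1 hc2
        funext i
        refine Fin.cases ?_ ?_ i
        · rw [hc1.1.1, hc2.1.1]
        · intro j
          exact congrFun h j
      · rintro d hd
        simp only [Finset.mem_filter, Finset.mem_univ, true_and] at hd
        obtain ⟨h0, hl, hP⟩ := hd
        refine ⟨Fin.cons u d, ?_, ?_⟩
        · simp only [Finset.mem_filter, Finset.mem_univ, true_and]
          have h1 : (Fin.cons u d : Fin (r + 2) → V) 1 = d 0 := by
            rw [← Fin.succ_zero_eq_one, Fin.cons_succ]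
          refine ⟨⟨Fin.cons_zero _ _, ?_, ?_⟩, ?_⟩
          · show (Fin.cons u d : Fin (r + 2) → V) (Fin.last (r + 1)) = v
            rw [← Fin.succ_last, Fin.cons_succ]; exact hl
          · intro i
            refine Fin.cases ?_ ?_ i
            · show 0 < B 0 ((Fin.cons u d : Fin (r+2) → V) 0)
                ((Fin.cons u d : Fin (r+2) → V) (Fin.succ 0))
              rw [Fin.cons_zero, Fin.cons_succ, h0]
              exact hw
            · intro j
              show 0 < B j.succ ((Fin.cons u d : Fin (r+2) → V) j.succ.castSucc)
                ((Fin.cons u d : Fin (r+2) → V) j.succ.succ)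
              rw [← Fin.succ_castSucc, Fin.cons_succ, Fin.cons_succ]
              exact hP j
          · rw [h1, h0]
        · funext i
          simp
    · have h0 : B 0 u w = 0 := Nat.eq_zero_of_not_pos hw
      rw [h0, zero_mul]
      symm
      rw [Finset.card_eq_zero]
      apply Finset.filter_eq_empty_iff.mpr
      rintro c - ⟨⟨hc0, -, hP⟩, hc1⟩
      have := hP 0
      rw [show (0 : Fin (r+1)).castSucc = 0 from rfl, hc0,
        show (0 : Fin (r+1)).succ = 1 from Fin.succ_zero_eq_one, hc1] at this
      exact hw this


/-- Let `P` be the level poset of `M` and let `S ⊆ {1,…,m-1}` correspond to the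
composition `(α 0, …, α (r-1))` of `m`.  The `(u,v)` entry of
`Bin(M^{α_1}) ⋯ Bin(M^{α_r})` equals the flag `f`-vector entry
`f_S([(u,0),(v,m)])`, i.e. the number of chains of the interval `[(u,0),(v,m)]`
through the rank set `S` (which is `0` when `(u,0) ≰ (v,m)`). -/
theorem flag_f_eq_prod_bin {V : Type*} [Fintype V] [DecidableEq V]
    (M : Matrix V V ℕ) (hbin : ∀ u v, M u v ≤ 1)
    (r : ℕ) (α : Fin r → ℕ) (hα : ∀ i, 0 < α i) (u v : V) :
    (List.ofFn fun i : Fin r => BinN (M ^ α i)).prod u v =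
      Nat.card {c : Fin (r + 1) → V //
        c 0 = u ∧ c (Fin.last r) = v ∧
        ∀ i : Fin r, 0 < (M ^ α i) (c i.castSucc) (c i.succ)} := by
  rw [Nat.card_eq_fintype_card, Fintype.card_subtype]
  rw [chain_count r (fun i => BinN (M ^ α i))
    (fun i x y => by unfold BinN; dsimp; split <;> omega) u v]
  congr 1
  apply Finset.filter_congr
  intro c _
  simp only [BinN, Matrix.of_apply, and_congr_right_iff]
  intro _ _
  constructor
  · intro h i
    have := h i
    by_contra hn
    simp [Nat.eq_zero_of_not_pos hn] at this
  · intro h i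
    simp [h i]
end

section
/- A level poset with underlying adjacency matrix M is level Eulerian (every non-singleton interval satisfies the Euler–Poincaré relation) if and only if for all p ≥ 1, the matrix sum ∑_{i=0}^{p} (−1)^i · Bin(M^i) · Bin(M^{p−i}) equals the zero matrix. -/
open scoped Classical

/-- The binary reduction of a nonnegative integer matrix, valued in `ℤ`. -/
def BinZ {V : Type*} (A : Matrix V V ℕ) : Matrix V V ℤ :=
  Matrix.of fun i j => if 0 < A i j then 1 else 0

/-- The order relation of the level poset of `M` on `V × ℤ`. -/
def levelLe {V : Type*} [Fintype V] [DecidableEq V] (M : Matrix V V ℕ)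
    (p q : V × ℤ) : Prop :=
  p = q ∨ (p.2 < q.2 ∧ 0 < (M ^ (q.2 - p.2).toNat) p.1 q.1)

/-- A level poset is level Eulerian if every (non-singleton) interval `[(u,i),(v,j)]`
satisfies the Euler–Poincaré relation `∑_{x ≤ z ≤ y} (-1)^{ρ(z)} = 0`. -/
def IsLevelEulerian {V : Type*} [Fintype V] [DecidableEq V] (M : Matrix V V ℕ) : Prop :=
  ∀ (u v : V) (i j : ℤ), i < j → 0 < (M ^ (j - i).toNat) u v →
    (∑ k ∈ Finset.Icc i j, ∑ w : V,
      (if levelLe M (u, i) (w, k) ∧ levelLe M (w, k) (v, j) then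
        ((-1 : ℤ) ^ (k - i).toNat) else 0)) = 0

lemma levelLe_iff {V : Type*} [Fintype V] [DecidableEq V] (M : Matrix V V ℕ)
    (u w : V) (i k : ℤ) (h : i ≤ k) :
    levelLe M (u, i) (w, k) ↔ 0 < (M ^ (k - i).toNat) u w := by
  rcases eq_or_lt_of_le h with h' | h'
  · subst h'
    have : (i - i).toNat = 0 := by omega
    simp only [levelLe, this, pow_zero, Matrix.one_apply, Prod.ext_iff, lt_irrefl, and_self,
      false_and, and_false, or_false]
    by_cases hw : u = w <;> simp [hw]
  · have hne : i ≠ k := h'.ne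
    simp [levelLe, h', Prod.ext_iff, hne]

lemma binZ_mul_apply {V : Type*} [Fintype V] [DecidableEq V]
    (A B : Matrix V V ℕ) (u v : V) :
    (BinZ A * BinZ B) u v = ∑ w, if 0 < A u w ∧ 0 < B w v then (1 : ℤ) else 0 := by
  rw [Matrix.mul_apply]
  refine Finset.sum_congr rfl fun w _ => ?_
  by_cases h1 : 0 < A u w <;> by_cases h2 : 0 < B w v <;> simp [BinZ, h1, h2]

lemma key {V : Type*} [Fintype V] [DecidableEq V] (M : Matrix V V ℕ)
    (u v : V) (i j : ℤ) (hij : i < j) :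
    (∑ k ∈ Finset.Icc i j, ∑ w : V,
      (if levelLe M (u, i) (w, k) ∧ levelLe M (w, k) (v, j) then
        ((-1 : ℤ) ^ (k - i).toNat) else 0))
    = ∑ a ∈ Finset.range ((j - i).toNat + 1),
        (-1 : ℤ) ^ a * (BinZ (M ^ a) * BinZ (M ^ ((j - i).toNat - a))) u v := by
  set p := (j - i).toNat with hp
  refine Finset.sum_nbij' (fun k => (k - i).toNat) (fun a => i + a) ?_ ?_ ?_ ?_ ?_
  · intro k hk; simp only [Finset.mem_Icc] at hk; simp only [Finset.mem_range]; omega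
  · intro a ha; simp only [Finset.mem_range] at ha; simp only [Finset.mem_Icc]; omega
  · intro k hk; simp only [Finset.mem_Icc] at hk; omega
  · intro a ha; simp only [Finset.mem_range] at ha; omega
  · intro k hk
    simp only [Finset.mem_Icc] at hk
    have h1 : i ≤ k := hk.1
    have h2 : k ≤ j := hk.2
    have hjk : (j - k).toNat = p - (k - i).toNat := by omega
    rw [binZ_mul_apply, Finset.mul_sum]
    refine Finset.sum_congr rfl fun w _ => ?_
    rw [levelLe_iff M u w i k h1, levelLe_iff M w v k j h2, hjk]
    by_cases h : 0 < (M ^ (k - i).toNat) u w ∧ 0 < (M ^ (p - (k - i).toNat)) w v <;>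
      simp [h]

lemma entry_zero {V : Type*} [Fintype V] [DecidableEq V] (M : Matrix V V ℕ)
    (u v : V) (p a : ℕ) (ha : a ≤ p) (hM : ¬ 0 < (M ^ p) u v) :
    (BinZ (M ^ a) * BinZ (M ^ (p - a))) u v = 0 := by
  rw [binZ_mul_apply]
  refine Finset.sum_eq_zero fun w _ => ?_
  rw [if_neg]
  rintro ⟨hw1, hw2⟩
  apply hM
  have : M ^ p = M ^ a * M ^ (p - a) := by rw [← pow_add]; congr 1; omega
  rw [this, Matrix.mul_apply]
  exact Finset.sum_pos' (fun w _ => Nat.zero_le _)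
    ⟨w, Finset.mem_univ w, Nat.mul_pos hw1 hw2⟩

/-- A level poset with underlying adjacency matrix `M` is level Eulerian iff
`∑_{i=0}^{p} (-1)^i Bin(M^i) Bin(M^{p-i}) = 0` for all `p ≥ 1`. -/
theorem isLevelEulerian_iff {V : Type*} [Fintype V] [DecidableEq V]
    (M : Matrix V V ℕ) (hbin : ∀ u v, M u v ≤ 1) :
    IsLevelEulerian M ↔
      ∀ p : ℕ, 1 ≤ p →
        (∑ i ∈ Finset.range (p + 1),
          ((-1 : ℤ) ^ i) • (BinZ (M ^ i) * BinZ (M ^ (p - i)))) = 0 := by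
  constructor
  · intro h p hp
    ext u v
    simp only [Matrix.sum_apply, Matrix.smul_apply, smul_eq_mul, Matrix.zero_apply]
    by_cases hM : 0 < (M ^ p) u v
    · have hij : (0 : ℤ) < (p : ℤ) := by exact_mod_cast hp
      have hpt : ((p : ℤ) - 0).toNat = p := by omega
      have := h u v 0 p hij (by rwa [hpt])
      rw [key M u v 0 (p : ℤ) hij] at this
      rw [hpt] at this
      convert this using 2
    · refine Finset.sum_eq_zero fun a ha => ?_
      simp only [Finset.mem_range] at ha
      rw [entry_zero M u v p a (by omega) hM, mul_zero]
  · intro h u v i j hij hM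
    rw [key M u v i j hij]
    have hp : 1 ≤ (j - i).toNat := by omega
    have := congrFun (congrFun (h _ hp) u) v
    simp only [Matrix.sum_apply, Matrix.smul_apply, smul_eq_mul, Matrix.zero_apply] at this
    exact this
end

section
/- Let M be an n×n indecomposable nonnegative matrix with period d and index γ (the least γ such that Bin(M^{t+d}) = Bin(M^t) for all t ≥ γ). If the Eulerian condition ∑_{i=0}^{p} (−1)^i Bin(M^i) Bin(M^{p−i}) = 0 holds for all 1 ≤ p < 2γ + 4d, then it holds for all p ≥ 1. -/
/-- The Eulerian sum `∑_{i=0}^{p} (-1)^i Bin(M^i) Bin(M^{p-i})`. -/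
noncomputable def EulerSum {n : ℕ} (M : Matrix (Fin n) (Fin n) ℝ) (p : ℕ) :
    Matrix (Fin n) (Fin n) ℝ :=
  ∑ i ∈ Finset.range (p + 1), ((-1 : ℝ) ^ i) • (Bin (M ^ i) * Bin (M ^ (p - i)))

noncomputable def Emat {n : ℕ} (M : Matrix (Fin n) (Fin n) ℝ) (d g m : ℕ) :
    Matrix (Fin n) (Fin n) ℝ :=
  ∑ i ∈ Finset.Ico (g+1+m) (g+1+m+2*d),
    ((-1 : ℝ) ^ i) • (Bin (M ^ i) * Bin (M ^ (2*g+1+m+2*d - i)))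

lemma per_two {n : ℕ} {M : Matrix (Fin n) (Fin n) ℝ} {d g : ℕ}
    (hper : ∀ t : ℕ, g+1 ≤ t → Bin (M ^ (t + d)) = Bin (M ^ t)) :
    ∀ t : ℕ, g+1 ≤ t → Bin (M ^ (t + 2*d)) = Bin (M ^ t) := by
  intro t ht
  have e : t + 2*d = t + d + d := by ring
  rw [e, hper (t+d) (by omega), hper t ht]

lemma shift_lemma {n : ℕ} {M : Matrix (Fin n) (Fin n) ℝ} {d g : ℕ}
    (hper : ∀ t : ℕ, g+1 ≤ t → Bin (M ^ (t + d)) = Bin (M ^ t)) (m : ℕ) :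
    EulerSum M (2*g+1+m+2*d) = EulerSum M (2*g+1+m) + Emat M d g m := by
  unfold EulerSum Emat
  rw [Finset.range_eq_Ico, Finset.range_eq_Ico]
  rw [← Finset.sum_Ico_consecutive
      (fun i => ((-1 : ℝ) ^ i) • (Bin (M ^ i) * Bin (M ^ (2*g+1+m+2*d - i))))
      (Nat.zero_le (g+1+m)) (show g+1+m ≤ 2*g+1+m+2*d+1 by omega)]
  rw [← Finset.sum_Ico_consecutive
      (fun i => ((-1 : ℝ) ^ i) • (Bin (M ^ i) * Bin (M ^ (2*g+1+m+2*d - i))))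
      (show g+1+m ≤ g+1+m+2*d by omega) (show g+1+m+2*d ≤ 2*g+1+m+2*d+1 by omega)]
  rw [← Finset.sum_Ico_consecutive
      (fun i => ((-1 : ℝ) ^ i) • (Bin (M ^ i) * Bin (M ^ (2*g+1+m - i))))
      (Nat.zero_le (g+1+m)) (show g+1+m ≤ 2*g+1+m+1 by omega)]
  have hA : ∑ i ∈ Finset.Ico 0 (g+1+m),
      ((-1 : ℝ) ^ i) • (Bin (M ^ i) * Bin (M ^ (2*g+1+m+2*d - i)))
      = ∑ i ∈ Finset.Ico 0 (g+1+m),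
      ((-1 : ℝ) ^ i) • (Bin (M ^ i) * Bin (M ^ (2*g+1+m - i))) := by
    apply Finset.sum_congr rfl
    intro i hi
    simp only [Finset.mem_Ico] at hi
    have e : 2*g+1+m+2*d - i = (2*g+1+m - i) + 2*d := by omega
    rw [e, per_two hper _ (by omega)]
  have hC : ∑ i ∈ Finset.Ico (g+1+m+2*d) (2*g+1+m+2*d+1),
      ((-1 : ℝ) ^ i) • (Bin (M ^ i) * Bin (M ^ (2*g+1+m+2*d - i)))
      = ∑ i ∈ Finset.Ico (g+1+m) (2*g+1+m+1),
      ((-1 : ℝ) ^ i) • (Bin (M ^ i) * Bin (M ^ (2*g+1+m - i))) := by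
    rw [Finset.sum_Ico_eq_sum_range, Finset.sum_Ico_eq_sum_range]
    have e1 : 2*g+1+m+2*d+1 - (g+1+m+2*d) = g+1 := by omega
    have e2 : 2*g+1+m+1 - (g+1+m) = g+1 := by omega
    rw [e1, e2]
    apply Finset.sum_congr rfl
    intro k hk
    simp only [Finset.mem_range] at hk
    have e3 : 2*g+1+m+2*d - (g+1+m+2*d+k) = g - k := by omega
    have e4 : 2*g+1+m - (g+1+m+k) = g - k := by omega
    have e5 : g+1+m+2*d+k = (g+1+m+k) + 2*d := by ring
    rw [e3, e4, e5, per_two hper _ (by omega)]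
    have e6 : ((-1:ℝ)) ^ ((g+1+m+k) + 2*d) = ((-1:ℝ)) ^ (g+1+m+k) := by
      rw [pow_add, pow_mul, neg_one_sq, one_pow, mul_one]
    rw [e6]
  rw [hA, hC]
  abel

lemma E_step {n : ℕ} {M : Matrix (Fin n) (Fin n) ℝ} {d g : ℕ}
    (hper : ∀ t : ℕ, g+1 ≤ t → Bin (M ^ (t + d)) = Bin (M ^ t)) (m : ℕ) :
    Emat M d g (m + d) = ((-1 : ℝ) ^ d) • Emat M d g m := by
  unfold Emat
  rw [Finset.smul_sum]
  rw [Finset.sum_Ico_eq_sum_range, Finset.sum_Ico_eq_sum_range]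
  have e1 : g+1+(m+d)+2*d - (g+1+(m+d)) = 2*d := by omega
  have e2 : g+1+m+2*d - (g+1+m) = 2*d := by omega
  rw [e1, e2]
  apply Finset.sum_congr rfl
  intro k hk
  simp only [Finset.mem_range] at hk
  have e3 : 2*g+1+(m+d)+2*d - (g+1+(m+d)+k) = g+2*d - k := by omega
  have e4 : 2*g+1+m+2*d - (g+1+m+k) = g+2*d - k := by omega
  have e5 : g+1+(m+d)+k = (g+1+m+k) + d := by ring
  rw [e3, e4, e5, hper _ (by omega)]
  rw [pow_add, smul_smul]
  ring_nf

lemma E_zero {n : ℕ} {M : Matrix (Fin n) (Fin n) ℝ} {d g : ℕ} (hd : 0 < d)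
    (hper : ∀ t : ℕ, g+1 ≤ t → Bin (M ^ (t + d)) = Bin (M ^ t))
    (hcheck : ∀ p : ℕ, 1 ≤ p → p < 2 * (g+1) + 4 * d → EulerSum M p = 0) :
    ∀ m : ℕ, Emat M d g m = 0 := by
  intro m
  induction m using Nat.strong_induction_on with
  | _ m ih =>
    by_cases hm : m < d
    · have h1 := hcheck (2*g+1+m) (by omega) (by omega)
      have h2 := hcheck (2*g+1+m+2*d) (by omega) (by omega)
      have hs := shift_lemma hper m
      rw [h1, h2] at hs
      simpa using hs.symm
    · obtain ⟨m', rfl⟩ : ∃ m', m = m' + d := ⟨m - d, by omega⟩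
      rw [E_step hper, ih m' (by omega), smul_zero]

/-- Let `M` be indecomposable nonnegative with period `d` and index `γ` (the least `γ`
with `Bin(M^{t+d}) = Bin(M^t)` for all `t ≥ γ`, `d` minimal such a `γ` exists).
If the Eulerian condition holds for all `1 ≤ p < 2γ + 4d` then it holds for all `p ≥ 1`. -/
theorem eulerian_condition_bounded_check {n : ℕ} (M : Matrix (Fin n) (Fin n) ℝ)
    (hM : ∀ i j, 0 ≤ M i j) (hInd : Indecomposable M)
    (d γ : ℕ) (hd : 0 < d) (hγ : 0 < γ)
    (hper : ∀ t : ℕ, γ ≤ t → Bin (M ^ (t + d)) = Bin (M ^ t))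
    (hγmin : ∀ γ' : ℕ, (∀ t : ℕ, γ' ≤ t → Bin (M ^ (t + d)) = Bin (M ^ t)) → γ ≤ γ')
    (hdmin : ∀ d' : ℕ, 0 < d' →
      (∃ γ' : ℕ, ∀ t : ℕ, γ' ≤ t → Bin (M ^ (t + d')) = Bin (M ^ t)) → d ≤ d')
    (hcheck : ∀ p : ℕ, 1 ≤ p → p < 2 * γ + 4 * d → EulerSum M p = 0) :
    ∀ p : ℕ, 1 ≤ p → EulerSum M p = 0 := by
  obtain ⟨g, rfl⟩ : ∃ g, γ = g + 1 := ⟨γ - 1, by omega⟩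
  intro p
  induction p using Nat.strong_induction_on with
  | _ p ih =>
    intro hp
    by_cases hlt : p < 2 * (g+1) + 4 * d
    · exact hcheck p hp hlt
    · obtain ⟨m, rfl⟩ : ∃ m, p = 2*g+1+m+2*d := ⟨p - (2*g+1+2*d), by omega⟩
      rw [shift_lemma hper m, ih (2*g+1+m) (by omega) (by omega),
        E_zero hd hper hcheck m, add_zero]
end

section
/- If P is a level Eulerian poset whose underlying adjacency matrix M is indecomposable, then the order n of M is even. -/
/-- If `P` is a level Eulerian poset (i.e. `∑_{i=0}^{p} (-1)^i Bin(M^i) Bin(M^{p-i}) = 0`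
for all `p ≥ 1`) whose underlying binary adjacency matrix `M` is indecomposable,
then the order `n` of `M` is even. -/
theorem levelEulerian_indecomposable_even_order {n : ℕ}
    (M : Matrix (Fin n) (Fin n) ℝ)
    (hbin : ∀ i j, M i j = 0 ∨ M i j = 1) (hInd : Indecomposable M)
    (hE : ∀ p : ℕ, 1 ≤ p →
      (∑ i ∈ Finset.range (p + 1),
        ((-1 : ℝ) ^ i) • (Bin (M ^ i) * Bin (M ^ (p - i)))) = 0) :
    Even n := by
  classical
  -- Entrywise nonnegativity of powers of M
  have hM0 : ∀ i j, 0 ≤ M i j := fun i j => by rcases hbin i j with h | h <;> simp [h]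
  have hpow : ∀ k (i j : Fin n), 0 ≤ (M ^ k) i j := by
    intro k
    induction k with
    | zero =>
      intro i j
      rw [pow_zero, Matrix.one_apply]
      split <;> norm_num
    | succ k ih =>
      intro i j
      rw [pow_succ, Matrix.mul_apply]
      exact Finset.sum_nonneg fun l _ => mul_nonneg (ih i l) (hM0 l j)
  -- Positive diagonal entries multiply
  have hdiagmul : ∀ a b (i : Fin n), 0 < (M ^ a) i i → 0 < (M ^ b) i i →
      0 < (M ^ (a + b)) i i := by
    intro a b i ha hb
    rw [pow_add, Matrix.mul_apply]
    have h1 : 0 < (M ^ a) i i * (M ^ b) i i := mul_pos ha hb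
    have h2 : (M ^ a) i i * (M ^ b) i i ≤ ∑ l, (M ^ a) i l * (M ^ b) l i :=
      Finset.single_le_sum (fun l _ => mul_nonneg (hpow a i l) (hpow b l i))
        (Finset.mem_univ i)
    linarith
  -- Choose an exponent m ≥ 1 with all diagonal entries of M^m positive
  choose t ht1 ht2 using fun i : Fin n => hInd i i
  set m : ℕ := ∏ i : Fin n, t i with hm
  have hm1 : 1 ≤ m := Finset.one_le_prod' fun i _ => ht1 i
  have hdiag : ∀ i : Fin n, 0 < (M ^ m) i i := by
    intro i
    obtain ⟨s, hs⟩ : t i ∣ m := Finset.dvd_prod_of_mem t (Finset.mem_univ i)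
    have key : ∀ u : ℕ, 0 < (M ^ (t i * (u + 1))) i i := by
      intro u
      induction u with
      | zero => simpa using ht2 i
      | succ u ih =>
        have h := hdiagmul (t i * (u + 1)) (t i) i ih (ht2 i)
        have he : t i * (u + 1) + t i = t i * (u + 1 + 1) := by ring
        rwa [he] at h
    have hs1 : 1 ≤ s := by
      rcases Nat.eq_zero_or_pos s with h | h
      · subst h; simp at hs; omega
      · exact h
    have hseq : s - 1 + 1 = s := by omega
    have hk := key (s - 1)
    rw [hseq] at hk
    rw [hs]
    exact hk
  -- Counting function
  set N : ℕ → ℕ → ℕ := fun a b =>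
    (Finset.univ.filter fun p : Fin n × Fin n =>
      0 < (M ^ a) p.1 p.2 ∧ 0 < (M ^ b) p.2 p.1).card with hNdef
  -- The trace of Bin(M^a) * Bin(M^b)
  have htr : ∀ a b : ℕ, Matrix.trace (Bin (M ^ a) * Bin (M ^ b)) = (N a b : ℝ) := by
    intro a b
    have hterm : ∀ i k : Fin n,
        (Bin (M ^ a)) i k * (Bin (M ^ b)) k i
          = if 0 < (M ^ a) i k ∧ 0 < (M ^ b) k i then (1 : ℝ) else 0 := by
      intro i k
      simp only [Bin, Matrix.of_apply]
      by_cases h1 : 0 < (M ^ a) i k <;> by_cases h2 : 0 < (M ^ b) k i <;>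
        simp [h1, h2]
    calc Matrix.trace (Bin (M ^ a) * Bin (M ^ b))
        = ∑ i : Fin n, ∑ k : Fin n,
            (if 0 < (M ^ a) i k ∧ 0 < (M ^ b) k i then (1 : ℝ) else 0) := by
          simp only [Matrix.trace, Matrix.diag, Matrix.mul_apply, hterm]
      _ = ∑ p : Fin n × Fin n,
            (if 0 < (M ^ a) p.1 p.2 ∧ 0 < (M ^ b) p.2 p.1 then (1 : ℝ) else 0) := by
          rw [← Finset.univ_product_univ, Finset.sum_product]
      _ = (N a b : ℝ) := by rw [Finset.sum_boole]
  -- Symmetry of N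
  have hNsymm : ∀ a b : ℕ, N a b = N b a := by
    intro a b
    apply Finset.card_bij (fun p _ => Prod.swap p)
    · intro p hp
      simp only [Finset.mem_filter, Finset.mem_univ, true_and] at hp ⊢
      exact ⟨hp.2, hp.1⟩
    · intro p _ q _ h
      exact Prod.swap_injective h
    · intro p hp
      simp only [Finset.mem_filter, Finset.mem_univ, true_and] at hp
      exact ⟨Prod.swap p, by
        simp only [Finset.mem_filter, Finset.mem_univ, true_and]
        exact ⟨hp.2, hp.1⟩, by simp⟩
  -- Take trace of the Eulerian relation at p = 2m
  have hEE := hE (2 * m) (by omega)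
  have htr0 : ∑ i ∈ Finset.range (2 * m + 1),
      ((-1 : ℝ) ^ i) * (N i (2 * m - i) : ℝ) = 0 := by
    have h := congrArg Matrix.trace hEE
    rw [Matrix.trace_sum] at h
    simp only [Matrix.trace_smul, smul_eq_mul, htr, Matrix.trace_zero] at h
    exact h
  -- Transfer to ℤ, then to ZMod 2
  have hZ : ∑ i ∈ Finset.range (2 * m + 1),
      ((-1 : ℤ) ^ i) * (N i (2 * m - i) : ℤ) = 0 := by
    have : ((∑ i ∈ Finset.range (2 * m + 1),
        ((-1 : ℤ) ^ i) * (N i (2 * m - i) : ℤ) : ℤ) : ℝ) = 0 := by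
      push_cast
      exact htr0
    exact_mod_cast this
  have hZ2 : ∑ i ∈ Finset.range (2 * m + 1), (N i (2 * m - i) : ZMod 2) = 0 := by
    have h := congrArg (fun z : ℤ => (z : ZMod 2)) hZ
    push_cast at h
    have hneg : (-1 : ZMod 2) = 1 := by decide
    simpa [hneg] using h
  -- Kill the off-middle terms by the involution i ↦ 2m - i
  have hmem : m ∈ Finset.range (2 * m + 1) := Finset.mem_range.mpr (by omega)
  have hrest : ∑ i ∈ (Finset.range (2 * m + 1)).erase m,
      (N i (2 * m - i) : ZMod 2) = 0 := by
    apply Finset.sum_involution (fun i _ => 2 * m - i)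
    · intro i hi
      obtain ⟨hne, hlt⟩ := Finset.mem_erase.mp hi
      have hle : i ≤ 2 * m := by
        have := Finset.mem_range.mp hlt; omega
      have he : 2 * m - (2 * m - i) = i := by omega
      rw [he, hNsymm (2 * m - i) i]
      exact CharTwo.add_self_eq_zero _
    · intro i hi _
      obtain ⟨hne, hlt⟩ := Finset.mem_erase.mp hi
      have := Finset.mem_range.mp hlt
      omega
    · intro i hi
      obtain ⟨hne, hlt⟩ := Finset.mem_erase.mp hi
      have := Finset.mem_range.mp hlt
      rw [Finset.mem_erase, Finset.mem_range]
      omega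
    · intro i hi
      obtain ⟨hne, hlt⟩ := Finset.mem_erase.mp hi
      have := Finset.mem_range.mp hlt
      omega
  have hmid : (N m m : ZMod 2) = 0 := by
    rw [← Finset.add_sum_erase _ _ hmem, hrest, add_zero] at hZ2
    have he : 2 * m - m = m := by omega
    rwa [he] at hZ2
  -- N m m ≡ n (mod 2): off-diagonal pairs cancel via swap; diagonal has n elements
  set P : Finset (Fin n × Fin n) := Finset.univ.filter fun p : Fin n × Fin n =>
      0 < (M ^ m) p.1 p.2 ∧ 0 < (M ^ m) p.2 p.1 with hPdef
  have hNP : N m m = P.card := rfl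
  set Pd : Finset (Fin n × Fin n) := P.filter fun p => p.1 = p.2 with hPddef
  set Po : Finset (Fin n × Fin n) := P.filter fun p => ¬ p.1 = p.2 with hPodef
  have hsplit : Pd.card + Po.card = P.card :=
    Finset.card_filter_add_card_filter_not _
  have hPo : (Po.card : ZMod 2) = 0 := by
    have : (Po.card : ZMod 2) = ∑ _p ∈ Po, (1 : ZMod 2) := by simp
    rw [this]
    apply Finset.sum_involution (fun p _ => Prod.swap p)
    · intro p _
      decide
    · intro p hp _
      simp only [hPodef, hPdef, Finset.mem_filter, Finset.mem_univ, true_and] at hp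
      intro hcon
      exact hp.2 (congrArg Prod.fst hcon).symm
    · intro p hp
      simp only [hPodef, hPdef, Finset.mem_filter, Finset.mem_univ, true_and] at hp ⊢
      exact ⟨⟨hp.1.2, hp.1.1⟩, fun h => hp.2 h.symm⟩
    · intro p _
      exact Prod.swap_swap p
  have hPd : Pd.card = n := by
    have : Pd = Finset.univ.image fun i : Fin n => (i, i) := by
      ext p
      simp only [hPddef, hPdef, Finset.mem_filter, Finset.mem_univ, true_and,
        Finset.mem_image]
      constructor
      · rintro ⟨_, h2⟩
        exact ⟨p.1, Prod.ext rfl h2⟩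
      · rintro ⟨i, rfl⟩
        exact ⟨⟨hdiag i, hdiag i⟩, rfl⟩
    rw [this, Finset.card_image_of_injective _ (fun a b h => (Prod.mk.injEq _ _ _ _ ▸ h : _ ∧ _).1), Finset.card_univ, Fintype.card_fin]
  have hn0 : (n : ZMod 2) = 0 := by
    have : ((Pd.card + Po.card : ℕ) : ZMod 2) = 0 := by
      rw [hsplit, ← hNP]; exact hmid
    rw [Nat.cast_add, hPo, add_zero, hPd] at this
    exact this
  have hdvd : 2 ∣ n := (ZMod.natCast_eq_zero_iff n 2).mp hn0
  exact even_iff_two_dvd.mpr hdvd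
end

section
/- A level poset P with adjacency matrix M is level half-Eulerian if and only if the level poset of the block matrix D(M) = [[M, M],[M, M]] is level Eulerian. -/
open scoped Classical

/-- Level half-Eulerian: every non-singleton interval `[x,y]` satisfies
`∑_{x < z < y} (-1)^{ρ(x,z)-1} = [ρ(x,y) even]`. -/
def IsLevelHalfEulerian {V : Type*} [Fintype V] [DecidableEq V] (M : Matrix V V ℕ) : Prop :=
  ∀ (u v : V) (i j : ℤ), i < j → 0 < (M ^ (j - i).toNat) u v →
    (∑ k ∈ Finset.Ioo i j, ∑ w : V,
      (if levelLe M (u, i) (w, k) ∧ levelLe M (w, k) (v, j) then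
        ((-1 : ℤ) ^ ((k - i).toNat - 1)) else 0)) =
      (if Even (j - i) then 1 else 0)

section AuxLemmas

variable {V : Type*} [Fintype V] [DecidableEq V]

lemma levelLe_same {W : Type*} [Fintype W] [DecidableEq W]
    (N : Matrix W W ℕ) (u w : W) (i : ℤ) :
    levelLe N (u, i) (w, i) ↔ u = w := by
  simp [levelLe, Prod.ext_iff]

lemma levelLe_lt {W : Type*} [Fintype W] [DecidableEq W]
    (N : Matrix W W ℕ) (u w : W) (i k : ℤ) (h : i < k) :
    levelLe N (u, i) (w, k) ↔ 0 < (N ^ (k - i).toNat) u w := by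
  simp [levelLe, Prod.ext_iff, h, h.ne]

lemma double_pow (M : Matrix V V ℕ) (n : ℕ) :
    (Matrix.fromBlocks M M M M) ^ (n + 1) =
      Matrix.fromBlocks ((2 ^ n) • M ^ (n + 1)) ((2 ^ n) • M ^ (n + 1))
        ((2 ^ n) • M ^ (n + 1)) ((2 ^ n) • M ^ (n + 1)) := by
  induction n with
  | zero => simp
  | succ n ih =>
      rw [pow_succ, ih, Matrix.fromBlocks_multiply]
      have : (2 ^ n • M ^ (n + 1)) * M + (2 ^ n • M ^ (n + 1)) * M
          = 2 ^ (n + 1) • M ^ (n + 2) := by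
        rw [smul_mul_assoc, ← pow_succ, ← two_nsmul, ← mul_nsmul', pow_succ 2 n, mul_comm]
      rw [this]

lemma entry_pos (M : Matrix V V ℕ) (n : ℕ) (a b : V ⊕ V) :
    0 < ((Matrix.fromBlocks M M M M) ^ (n + 1)) a b ↔
      0 < (M ^ (n + 1)) (Sum.elim id id a) (Sum.elim id id b) := by
  rw [double_pow]
  have key : ∀ x : ℕ, 0 < 2 ^ n * x ↔ 0 < x := by
    intro x
    constructor
    · intro h; exact Nat.pos_of_ne_zero fun hx => by simp [hx] at h
    · intro h; exact Nat.mul_pos (pow_pos (by norm_num) n) h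
  rcases a with a | a <;> rcases b with b | b <;>
    simp only [Matrix.fromBlocks_apply₁₁, Matrix.fromBlocks_apply₁₂,
      Matrix.fromBlocks_apply₂₁, Matrix.fromBlocks_apply₂₂,
      Matrix.smul_apply, smul_eq_mul, Sum.elim_inl, Sum.elim_inr, id_eq] <;>
    exact key _

lemma levelLe_double (M : Matrix V V ℕ) (a w : V ⊕ V) (i k : ℤ) (h : i < k) :
    levelLe (Matrix.fromBlocks M M M M) (a, i) (w, k) ↔
      levelLe M (Sum.elim id id a, i) (Sum.elim id id w, k) := by
  rw [levelLe_lt _ _ _ _ _ h, levelLe_lt _ _ _ _ _ h]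
  obtain ⟨m, hm⟩ : ∃ m, (k - i).toNat = m + 1 := ⟨(k - i).toNat - 1, by omega⟩
  rw [hm]
  exact entry_pos M m a w

/-- The half-Eulerian sum equals minus the Eulerian-style middle sum. -/
lemma half_sum_eq_neg (M : Matrix V V ℕ) (u v : V) (i j : ℤ) :
    (∑ k ∈ Finset.Ioo i j, ∑ w : V,
      (if levelLe M (u, i) (w, k) ∧ levelLe M (w, k) (v, j) then
        ((-1 : ℤ) ^ ((k - i).toNat - 1)) else 0)) =
    - (∑ k ∈ Finset.Ioo i j, ∑ w : V,
      (if levelLe M (u, i) (w, k) ∧ levelLe M (w, k) (v, j) then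
        ((-1 : ℤ) ^ (k - i).toNat) else 0)) := by
  rw [← Finset.sum_neg_distrib]
  refine Finset.sum_congr rfl fun k hk => ?_
  rw [← Finset.sum_neg_distrib]
  refine Finset.sum_congr rfl fun w _ => ?_
  obtain ⟨hik, -⟩ := Finset.mem_Ioo.mp hk
  obtain ⟨m, hm⟩ : ∃ m, (k - i).toNat = m + 1 := ⟨(k - i).toNat - 1, by omega⟩
  rw [hm]
  split
  · simp [pow_succ]
  · simp

/-- The Eulerian sum for the double decomposes as `1 + (-1)^ρ + 2 * middle`. -/
lemma double_sum_eq (M : Matrix V V ℕ) (a b : V ⊕ V) (i j : ℤ) (hij : i < j)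
    (hpos : 0 < (M ^ (j - i).toNat) (Sum.elim id id a) (Sum.elim id id b)) :
    (∑ k ∈ Finset.Icc i j, ∑ w : V ⊕ V,
      (if levelLe (Matrix.fromBlocks M M M M) ((a : V ⊕ V), i) (w, k) ∧
          levelLe (Matrix.fromBlocks M M M M) (w, k) (b, j) then
        ((-1 : ℤ) ^ (k - i).toNat) else 0)) =
    1 + (-1 : ℤ) ^ (j - i).toNat +
      2 * (∑ k ∈ Finset.Ioo i j, ∑ w : V,
        (if levelLe M (Sum.elim id id a, i) (w, k) ∧
            levelLe M (w, k) (Sum.elim id id b, j) then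
          ((-1 : ℤ) ^ (k - i).toNat) else 0)) := by
  set D := Matrix.fromBlocks M M M M with hD
  have hDab : levelLe D (a, i) (b, j) := by
    rw [levelLe_lt _ _ _ _ _ hij]
    obtain ⟨m, hm⟩ : ∃ m, (j - i).toNat = m + 1 := ⟨(j - i).toNat - 1, by omega⟩
    rw [hm]
    rw [hm] at hpos
    exact (entry_pos M m a b).mpr hpos
  have h1 : Finset.Icc i j = insert i (Finset.Ioc i j) := (Finset.Ioc_insert_left hij.le).symm
  have h2 : Finset.Ioc i j = insert j (Finset.Ioo i j) := (Finset.Ioo_insert_right hij).symm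
  rw [h1, Finset.sum_insert (by simp), h2, Finset.sum_insert (by simp)]
  have pi : (∑ w : V ⊕ V,
      (if levelLe D (a, i) (w, i) ∧ levelLe D (w, i) (b, j) then
        ((-1 : ℤ) ^ (i - i).toNat) else 0)) = 1 := by
    have hc : ∀ w : V ⊕ V,
        (levelLe D (a, i) (w, i) ∧ levelLe D (w, i) (b, j)) ↔ w = a := by
      intro w
      constructor
      · rintro ⟨h1', -⟩; exact ((levelLe_same D a w i).mp h1').symm
      · rintro rfl; exact ⟨Or.inl rfl, hDab⟩
    simp only [hc, sub_self, Int.toNat_zero, pow_zero]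
    simp
  have pj : (∑ w : V ⊕ V,
      (if levelLe D (a, i) (w, j) ∧ levelLe D (w, j) (b, j) then
        ((-1 : ℤ) ^ (j - i).toNat) else 0)) = (-1 : ℤ) ^ (j - i).toNat := by
    have hc : ∀ w : V ⊕ V,
        (levelLe D (a, i) (w, j) ∧ levelLe D (w, j) (b, j)) ↔ w = b := by
      intro w
      constructor
      · rintro ⟨-, h2'⟩; exact (levelLe_same D w b j).mp h2'
      · rintro rfl; exact ⟨hDab, Or.inl rfl⟩
    simp only [hc]
    simp
  have pm : ∀ k ∈ Finset.Ioo i j, (∑ w : V ⊕ V,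
      (if levelLe D (a, i) (w, k) ∧ levelLe D (w, k) (b, j) then
        ((-1 : ℤ) ^ (k - i).toNat) else 0)) =
      2 * (∑ w : V,
        (if levelLe M (Sum.elim id id a, i) (w, k) ∧
            levelLe M (w, k) (Sum.elim id id b, j) then
          ((-1 : ℤ) ^ (k - i).toNat) else 0)) := by
    intro k hk
    obtain ⟨hik, hkj⟩ := Finset.mem_Ioo.mp hk
    rw [Fintype.sum_sum_type]
    have e1 : ∀ w : V,
        (levelLe D (a, i) (Sum.inl w, k) ∧ levelLe D (Sum.inl w, k) (b, j)) ↔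
        (levelLe M (Sum.elim id id a, i) (w, k) ∧
          levelLe M (w, k) (Sum.elim id id b, j)) := by
      intro w
      rw [levelLe_double M a (Sum.inl w) i k hik, levelLe_double M (Sum.inl w) b k j hkj]
      exact Iff.rfl
    have e2 : ∀ w : V,
        (levelLe D (a, i) (Sum.inr w, k) ∧ levelLe D (Sum.inr w, k) (b, j)) ↔
        (levelLe M (Sum.elim id id a, i) (w, k) ∧
          levelLe M (w, k) (Sum.elim id id b, j)) := by
      intro w
      rw [levelLe_double M a (Sum.inr w) i k hik, levelLe_double M (Sum.inr w) b k j hkj]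
      exact Iff.rfl
    simp only [e1, e2]
    ring
  rw [pi, pj, Finset.sum_congr rfl pm, ← Finset.mul_sum]
  ring

end AuxLemmas

/-- A level poset with adjacency matrix `M` is level half-Eulerian iff the level
poset of the horizontal double `D(M) = [[M,M],[M,M]]` is level Eulerian. -/
theorem isLevelHalfEulerian_iff_horizontal_double_eulerian
    {V : Type*} [Fintype V] [DecidableEq V]
    (M : Matrix V V ℕ) (hbin : ∀ u v, M u v ≤ 1) :
    IsLevelHalfEulerian M ↔ IsLevelEulerian (Matrix.fromBlocks M M M M) := by
  constructor
  · intro h a b i j hij hpos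
    obtain ⟨m, hm⟩ : ∃ m, (j - i).toNat = m + 1 := ⟨(j - i).toNat - 1, by omega⟩
    have hposM : 0 < (M ^ (j - i).toNat) (Sum.elim id id a) (Sum.elim id id b) := by
      rw [hm] at hpos ⊢
      exact (entry_pos M m a b).mp hpos
    have hhe := h (Sum.elim id id a) (Sum.elim id id b) i j hij hposM
    rw [half_sum_eq_neg] at hhe
    rw [double_sum_eq M a b i j hij hposM]
    have hcast : ((j - i).toNat : ℤ) = j - i := Int.toNat_of_nonneg (by omega)
    by_cases hev : Even (j - i)
    · have hevn : Even ((j - i).toNat) := by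
        rwa [← Int.even_coe_nat, hcast]
      rw [hevn.neg_one_pow]
      simp only [hev, if_pos] at hhe
      linarith
    · have hodn : Odd ((j - i).toNat) := by
        simp only [Int.even_iff] at hev
        rw [Nat.odd_iff]
        omega
      rw [hodn.neg_one_pow]
      simp only [hev, if_neg, not_false_iff] at hhe
      linarith
  · intro h u v i j hij hpos
    obtain ⟨m, hm⟩ : ∃ m, (j - i).toNat = m + 1 := ⟨(j - i).toNat - 1, by omega⟩
    have hposD : 0 < ((Matrix.fromBlocks M M M M) ^ (j - i).toNat)
        (Sum.inl u : V ⊕ V) (Sum.inl v) := by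
      rw [hm] at hpos ⊢
      exact (entry_pos M m (Sum.inl u) (Sum.inl v)).mpr hpos
    have he := h (Sum.inl u) (Sum.inl v) i j hij hposD
    rw [double_sum_eq M (Sum.inl u) (Sum.inl v) i j hij (by simpa using hpos)] at he
    rw [Sum.elim_inl, Sum.elim_inl, id_eq, id_eq] at he
    rw [half_sum_eq_neg]
    have hcast : ((j - i).toNat : ℤ) = j - i := Int.toNat_of_nonneg (by omega)
    by_cases hev : Even (j - i)
    · have hevn : Even ((j - i).toNat) := by
        rwa [← Int.even_coe_nat, hcast]
      rw [hevn.neg_one_pow] at he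
      simp only [hev, if_pos]
      linarith
    · have hodn : Odd ((j - i).toNat) := by
        simp only [Int.even_iff] at hev
        rw [Nat.odd_iff]
        omega
      rw [hodn.neg_one_pow] at he
      simp only [hev, if_neg, not_false_iff]
      linarith
end

section
/- For any n×n binary matrix M, the level poset of the vertical double D(M) = [[0, I],[M, 0]] (a 2n×2n block matrix) is level half-Eulerian. -/
open scoped Classical

namespace VDaux

variable {V : Type*} [Fintype V] [DecidableEq V] (M : Matrix V V ℕ)

def DD (M : Matrix V V ℕ) : Matrix (V ⊕ V) (V ⊕ V) ℕ := Matrix.fromBlocks 0 1 M 0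

lemma DD_sq : DD M ^ 2 = Matrix.fromBlocks M 0 0 M := by
  rw [sq, DD, Matrix.fromBlocks_multiply]; simp

lemma pow_even (t : ℕ) : (DD M ^ (2*t)) = Matrix.fromBlocks (M^t) 0 0 (M^t) := by
  induction t with
  | zero => simp [← Matrix.fromBlocks_one]
  | succ t ih =>
    rw [show 2*(t+1) = 2*t+2 from by ring, pow_add, ih, DD_sq, Matrix.fromBlocks_multiply]
    simp [pow_succ]

lemma pow_odd (t : ℕ) : (DD M ^ (2*t+1)) = Matrix.fromBlocks 0 (M^t) (M^(t+1)) 0 := by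
  rw [pow_succ, pow_even, DD, Matrix.fromBlocks_multiply]
  simp [pow_succ]

lemma step_right (s : ℕ) (u : V ⊕ V) (c : V) :
    (DD M ^ (s+1)) u (Sum.inr c) = (DD M ^ s) u (Sum.inl c) := by
  rcases Nat.even_or_odd s with ⟨t, ht⟩ | ⟨t, ht⟩
  · subst ht
    rw [show t + t + 1 = 2*t+1 from by ring, show t + t = 2*t from by ring, pow_odd, pow_even]
    cases u <;> simp
  · subst ht
    rw [show 2*t+1+1 = 2*(t+1) from by ring, pow_even, pow_odd]
    cases u <;> simp

lemma step_left (s : ℕ) (c : V) (w : V ⊕ V) :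
    (DD M ^ (s+1)) (Sum.inl c) w = (DD M ^ s) (Sum.inr c) w := by
  rcases Nat.even_or_odd s with ⟨t, ht⟩ | ⟨t, ht⟩
  · subst ht
    rw [show t + t + 1 = 2*t+1 from by ring, show t + t = 2*t from by ring, pow_odd, pow_even]
    cases w <;> simp
  · subst ht
    rw [show 2*t+1+1 = 2*(t+1) from by ring, pow_even, pow_odd]
    cases w <;> simp

lemma even_offdiag (m : ℕ) (hm : Even m) (a c : V) :
    (DD M ^ m) (Sum.inl a) (Sum.inr c) = 0 ∧ (DD M ^ m) (Sum.inr a) (Sum.inl c) = 0 := by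
  obtain ⟨t, rfl⟩ := hm
  rw [show t + t = 2*t from by ring, pow_even]
  simp

lemma odd_diag (m : ℕ) (hm : ¬ Even m) (a c : V) :
    (DD M ^ m) (Sum.inl a) (Sum.inl c) = 0 ∧ (DD M ^ m) (Sum.inr a) (Sum.inr c) = 0 := by
  obtain ⟨t, rfl⟩ := Nat.not_even_iff_odd.mp hm
  rw [pow_odd]
  simp



lemma pair_inl (a : V) (v : V ⊕ V) (d m : ℕ) (hm : m < d) (hme : Even m) :
    (∑ w : V ⊕ V, if 0 < (DD M ^ m) (Sum.inl a) w ∧ 0 < (DD M ^ (d-m)) w v then (1:ℤ) else 0)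
    = ∑ w : V ⊕ V, if 0 < (DD M ^ (m+1)) (Sum.inl a) w ∧ 0 < (DD M ^ (d-(m+1))) w v then (1:ℤ) else 0 := by
  rw [Fintype.sum_sum_type, Fintype.sum_sum_type]
  have hz1 : ∀ c : V, (DD M ^ m) (Sum.inl a) (Sum.inr c) = 0 := fun c => (even_offdiag M m hme a c).1
  have hz2 : ∀ c : V, (DD M ^ (m+1)) (Sum.inl a) (Sum.inl c) = 0 :=
    fun c => (odd_diag M (m+1) (by simp [Nat.even_add_one, hme]) a c).1
  have hf1 : ∀ c : V, (DD M ^ (m+1)) (Sum.inl a) (Sum.inr c) = (DD M ^ m) (Sum.inl a) (Sum.inl c) :=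
    fun c => step_right M m (Sum.inl a) c
  have hf2 : ∀ c : V, (DD M ^ (d-(m+1))) (Sum.inr c) v = (DD M ^ (d-m)) (Sum.inl c) v := by
    intro c
    have h1 : d - m = (d - (m+1)) + 1 := by omega
    rw [h1, step_left M (d-(m+1)) c v]
  simp [hz1, hz2, hf1, hf2]

lemma pair_inr (a : V) (v : V ⊕ V) (d m : ℕ) (hm : m < d) (hme : ¬ Even m) :
    (∑ w : V ⊕ V, if 0 < (DD M ^ m) (Sum.inr a) w ∧ 0 < (DD M ^ (d-m)) w v then (1:ℤ) else 0)
    = ∑ w : V ⊕ V, if 0 < (DD M ^ (m+1)) (Sum.inr a) w ∧ 0 < (DD M ^ (d-(m+1))) w v then (1:ℤ) else 0 := by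
  rw [Fintype.sum_sum_type, Fintype.sum_sum_type]
  have hz1 : ∀ c : V, (DD M ^ m) (Sum.inr a) (Sum.inr c) = 0 := fun c => (odd_diag M m hme a c).2
  have hz2 : ∀ c : V, (DD M ^ (m+1)) (Sum.inr a) (Sum.inl c) = 0 :=
    fun c => (even_offdiag M (m+1) (by simp [Nat.even_add_one, hme]) a c).2
  have hf1 : ∀ c : V, (DD M ^ (m+1)) (Sum.inr a) (Sum.inr c) = (DD M ^ m) (Sum.inr a) (Sum.inl c) :=
    fun c => step_right M m (Sum.inr a) c
  have hf2 : ∀ c : V, (DD M ^ (d-(m+1))) (Sum.inr c) v = (DD M ^ (d-m)) (Sum.inl c) v := by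
    intro c
    have h1 : d - m = (d - (m+1)) + 1 := by omega
    rw [h1, step_left M (d-(m+1)) c v]
  simp [hz1, hz2, hf1, hf2]

lemma tele_even (N : ℕ → ℤ) (d : ℕ) (h : ∀ m, Even m → m < d → N m = N (m+1)) :
    ∀ k, k ≤ d → ∑ m ∈ Finset.Ioc 0 k, (-1:ℤ)^(m-1) * N m
      = N 0 - (if Even k then N k else 0) := by
  intro k
  induction k with
  | zero => intro _; simp
  | succ k ih =>
    intro hk
    rw [Finset.sum_Ioc_succ_top (Nat.zero_le _), ih (by omega)]
    by_cases he : Even k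
    · have h1 : N k = N (k+1) := h k he (by omega)
      have h2 : ¬ Even (k+1) := by simp [Nat.even_add_one, he]
      have h3 : (-1:ℤ)^(k+1-1) = 1 := Even.neg_one_pow he
      rw [if_pos he, if_neg h2, h3, h1]; ring
    · have h2 : Even (k+1) := Nat.even_add_one.mpr he
      have h3 : (-1:ℤ)^(k+1-1) = -1 := Odd.neg_one_pow (Nat.not_even_iff_odd.mp he)
      rw [if_neg he, if_pos h2, h3]; ring

lemma tele_odd (N : ℕ → ℤ) (d : ℕ) (h : ∀ m, ¬ Even m → m < d → N m = N (m+1)) :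
    ∀ k, k ≤ d → ∑ m ∈ Finset.Ioc 0 k, (-1:ℤ)^(m-1) * N m
      = (if Even k then 0 else N k) := by
  intro k
  induction k with
  | zero => intro _; simp
  | succ k ih =>
    intro hk
    rw [Finset.sum_Ioc_succ_top (Nat.zero_le _), ih (by omega)]
    by_cases he : Even k
    · have h2 : ¬ Even (k+1) := by simp [Nat.even_add_one, he]
      have h3 : (-1:ℤ)^(k+1-1) = 1 := Even.neg_one_pow he
      rw [if_pos he, if_neg h2, h3]; ring
    · have h1 : N k = N (k+1) := h k he (by omega)
      have h2 : Even (k+1) := Nat.even_add_one.mpr he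
      have h3 : (-1:ℤ)^(k+1-1) = -1 := Odd.neg_one_pow (Nat.not_even_iff_odd.mp he)
      rw [if_neg he, if_pos h2, h3, h1]; ring

end VDaux

/-- For any binary matrix `M`, the level poset of the vertical double
`D(M) = [[0, I],[M, 0]]` is level half-Eulerian. -/
theorem vertical_double_isLevelHalfEulerian
    {V : Type*} [Fintype V] [DecidableEq V]
    (M : Matrix V V ℕ) (hbin : ∀ u v, M u v ≤ 1) :
    IsLevelHalfEulerian (Matrix.fromBlocks 0 1 M 0) := by
  show IsLevelHalfEulerian (VDaux.DD M)
  intro u v i j hij hpos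
  set d : ℕ := (j - i).toNat with hdd
  have hd1 : 1 ≤ d := by omega
  have hj : j = i + (d : ℤ) := by omega
  have hpos' : 0 < (VDaux.DD M ^ d) u v := hpos
  have hlev : ∀ (a b : V ⊕ V) (x y : ℤ), x < y →
      (levelLe (VDaux.DD M) (a, x) (b, y) ↔ 0 < (VDaux.DD M ^ (y - x).toNat) a b) := by
    intro a b x y h
    unfold levelLe
    constructor
    · rintro (hq | ⟨_, h2⟩)
      · exact absurd (congrArg Prod.snd hq) (by simpa using h.ne)
      · exact h2
    · intro h2; exact Or.inr ⟨h, h2⟩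
  have hmap : Finset.Ioo i j
      = (Finset.Ioo 0 d).map ⟨fun m : ℕ => i + (m:ℤ), show Function.Injective (fun m : ℕ => i + (m:ℤ)) from fun a b hab => by simpa using hab⟩ := by
    ext x
    simp only [Finset.mem_Ioo, Finset.mem_map, Function.Embedding.coeFn_mk]
    constructor
    · rintro ⟨h1, h2⟩
      exact ⟨(x - i).toNat, by omega, by omega⟩
    · rintro ⟨a, ⟨ha1, ha2⟩, rfl⟩
      omega
  rw [hmap, Finset.sum_map]
  simp only [Function.Embedding.coeFn_mk]
  have hstep : ∀ m ∈ Finset.Ioo 0 d,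
      (∑ w : V ⊕ V, if levelLe (VDaux.DD M) (u, i) (w, i + (m:ℤ)) ∧
          levelLe (VDaux.DD M) (w, i + (m:ℤ)) (v, j) then
          ((-1 : ℤ) ^ ((i + (m:ℤ) - i).toNat - 1)) else 0)
      = (-1:ℤ)^(m-1) * ∑ w : V ⊕ V,
          if 0 < (VDaux.DD M ^ m) u w ∧ 0 < (VDaux.DD M ^ (d-m)) w v then (1:ℤ) else 0 := by
    intro m hm
    rw [Finset.mem_Ioo] at hm
    have e1 : (i + (m:ℤ) - i).toNat = m := by omega
    have e2 : (j - (i + (m:ℤ))).toNat = d - m := by omega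
    rw [Finset.mul_sum]
    apply Finset.sum_congr rfl
    intro w _
    have hc : (levelLe (VDaux.DD M) (u, i) (w, i + (m:ℤ)) ∧
        levelLe (VDaux.DD M) (w, i + (m:ℤ)) (v, j)) ↔
        (0 < (VDaux.DD M ^ m) u w ∧ 0 < (VDaux.DD M ^ (d-m)) w v) := by
      rw [hlev u w i (i+(m:ℤ)) (by omega), hlev w v (i+(m:ℤ)) j (by omega), e1, e2]
    rw [if_congr hc rfl rfl, e1, mul_ite, mul_one, mul_zero]
  rw [Finset.sum_congr rfl hstep]
  have hIoo : Finset.Ioo 0 d = Finset.Ioc 0 (d-1) := by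
    ext x
    simp only [Finset.mem_Ioo, Finset.mem_Ioc]
    omega
  rw [hIoo]
  have hji : j - i = (d:ℤ) := by omega
  simp only [hji, Int.even_coe_nat]
  -- N as a function
  set N : ℕ → ℤ := fun m => ∑ w : V ⊕ V,
      if 0 < (VDaux.DD M ^ m) u w ∧ 0 < (VDaux.DD M ^ (d-m)) w v then (1:ℤ) else 0 with hN
  have hN0 : N 0 = 1 := by
    have hcond : ∀ w : V ⊕ V,
        (0 < (VDaux.DD M ^ 0) u w ∧ 0 < (VDaux.DD M ^ (d-0)) w v) ↔ (w = u) := by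
      intro w
      rw [pow_zero, Nat.sub_zero]
      constructor
      · rintro ⟨h1, _⟩
        by_contra hne
        rw [Matrix.one_apply_ne (fun h => hne h.symm)] at h1
        exact lt_irrefl 0 h1
      · rintro rfl
        exact ⟨by simp [Matrix.one_apply], hpos'⟩
    simp only [hN, hcond]
    simp
  have hNd : N d = 1 := by
    have hcond : ∀ w : V ⊕ V,
        (0 < (VDaux.DD M ^ d) u w ∧ 0 < (VDaux.DD M ^ (d-d)) w v) ↔ (w = v) := by
      intro w
      rw [Nat.sub_self, pow_zero]
      constructor
      · rintro ⟨_, h2⟩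
        by_contra hne
        rw [Matrix.one_apply_ne hne] at h2
        exact lt_irrefl 0 h2
      · rintro rfl
        exact ⟨hpos', by simp [Matrix.one_apply]⟩
    simp only [hN, hcond]
    simp
  rcases u with a | a
  · -- u = inl a : pairing at even m
    have hpair : ∀ m, Even m → m < d → N m = N (m+1) := by
      intro m hme hmd
      simp only [hN]
      exact VDaux.pair_inl M a v d m hmd hme
    have htel := VDaux.tele_even N d hpair (d-1) (by omega)
    simp only [hN] at htel ⊢
    rw [htel]
    rcases Nat.even_or_odd d with hev | hod
    · have h1 : ¬ Even (d-1) := by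
        rw [Nat.even_iff] at hev ⊢
        omega
      rw [if_neg h1, if_pos hev, sub_zero]
      exact hN0
    · have h1 : Even (d-1) := by
        rw [Nat.odd_iff] at hod
        rw [Nat.even_iff]
        omega
      have h2 : ¬ Even d := by
        rw [Nat.odd_iff] at hod
        rw [Nat.even_iff]
        omega
      rw [if_pos h1, if_neg h2]
      have h3 : N (d-1) = N d := by
        have := hpair (d-1) h1 (by omega)
        rwa [show d - 1 + 1 = d from by omega] at this
      simp only [hN] at hN0 hNd h3
      rw [h3, hN0, hNd]
      ring
  · -- u = inr a : pairing at odd m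
    have hpair : ∀ m, ¬ Even m → m < d → N m = N (m+1) := by
      intro m hmo hmd
      simp only [hN]
      exact VDaux.pair_inr M a v d m hmd hmo
    have htel := VDaux.tele_odd N d hpair (d-1) (by omega)
    simp only [hN] at htel ⊢
    rw [htel]
    rcases Nat.even_or_odd d with hev | hod
    · have h1 : ¬ Even (d-1) := by
        rw [Nat.even_iff] at hev ⊢
        omega
      rw [if_neg h1, if_pos hev]
      have h3 : N (d-1) = N d := by
        have := hpair (d-1) h1 (by omega)
        rwa [show d - 1 + 1 = d from by omega] at this
      simp only [hN] at hNd h3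
      rw [h3, hNd]
    · have h1 : Even (d-1) := by
        rw [Nat.odd_iff] at hod
        rw [Nat.even_iff]
        omega
      have h2 : ¬ Even d := by
        rw [Nat.odd_iff] at hod
        rw [Nat.even_iff]
        omega
      rw [if_pos h1, if_neg h2]
end

section
/- If P is a level half-Eulerian poset whose underlying matrix M is primitive, then the order n of M is odd. -/
/-- The all-ones matrix. -/
def Jmat (V : Type*) : Matrix V V ℤ := Matrix.of fun _ _ => 1

/-- If `P` is a level half-Eulerian poset (in matrix terms:
`∑_{i=1}^{p-1} (-1)^{i-1} Bin(M^i) Bin(M^{p-i}) = J·[p even]` for all `p ≥ 1`)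
whose underlying binary matrix `M` is primitive, then the order `n` of `M` is odd. -/
theorem levelHalfEulerian_primitive_odd_order {n : ℕ} (hn : 0 < n)
    (M : Matrix (Fin n) (Fin n) ℕ) (hbin : ∀ i j, M i j ≤ 1)
    (hprim : ∃ γ : ℕ, 0 < γ ∧ ∀ i j : Fin n, 0 < (M ^ γ) i j)
    (hHE : ∀ p : ℕ, 1 ≤ p →
      (∑ i ∈ Finset.Icc 1 (p - 1),
        ((-1 : ℤ) ^ (i - 1)) • (BinZ (M ^ i) * BinZ (M ^ (p - i)))) =
        (if Even p then Jmat (Fin n) else 0)) :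
    Odd n := by
  obtain ⟨γ, hγ, hpos⟩ := hprim
  have x : Fin n := ⟨0, hn⟩
  -- every column of M is nonzero
  have hcolM : ∀ j : Fin n, ∃ l, 0 < M l j := by
    intro j
    by_contra h
    push_neg at h
    have h0 : ∀ l, M l j = 0 := fun l => Nat.le_zero.mp (h l)
    have hγ' : γ - 1 + 1 = γ := Nat.succ_pred_eq_of_pos hγ
    have hz : (M ^ γ) x j = 0 := by
      rw [← hγ', pow_succ, Matrix.mul_apply]
      simp [h0]
    exact absurd (hpos x j) (by omega)
  -- every column of M^m is nonzero
  have hcol : ∀ m, ∀ j : Fin n, ∃ l, 0 < (M ^ m) l j := by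
    intro m
    induction m with
    | zero => intro j; exact ⟨j, by simp⟩
    | succ m ih =>
      intro j
      obtain ⟨k, hk⟩ := hcolM j
      obtain ⟨l, hl⟩ := ih k
      refine ⟨l, ?_⟩
      rw [pow_succ, Matrix.mul_apply]
      exact Finset.sum_pos' (fun _ _ => Nat.zero_le _)
        ⟨k, Finset.mem_univ k, Nat.mul_pos hl hk⟩
  -- M^i is positive for all i ≥ γ
  have hposAll : ∀ i, γ ≤ i → ∀ a b : Fin n, 0 < (M ^ i) a b := by
    intro i hi a b
    have hdecomp : M ^ i = M ^ γ * M ^ (i - γ) := by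
      rw [← pow_add]; congr 1; omega
    obtain ⟨l, hl⟩ := hcol (i - γ) b
    rw [hdecomp, Matrix.mul_apply]
    exact Finset.sum_pos' (fun _ _ => Nat.zero_le _)
      ⟨l, Finset.mem_univ l, Nat.mul_pos (hpos a l) hl⟩
  have hJ : ∀ i, γ ≤ i → BinZ (M ^ i) = Jmat (Fin n) := by
    intro i hi
    ext a b
    simp [BinZ, Jmat, hposAll i hi a b]
  -- the (x,x)-entry of the hypothesis, reduced mod 2
  have key : ∀ p, 1 ≤ p →
      (∑ i ∈ Finset.Icc 1 (p - 1),
        (((BinZ (M ^ i) * BinZ (M ^ (p - i))) x x : ℤ) : ZMod 2)) =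
      (if Even p then 1 else 0) := by
    intro p hp
    have h := congrArg (fun A : Matrix (Fin n) (Fin n) ℤ => A x x) (hHE p hp)
    simp only [Matrix.sum_apply, Matrix.smul_apply, smul_eq_mul,
      apply_ite (fun A : Matrix (Fin n) (Fin n) ℤ => A x x), Matrix.zero_apply,
      Jmat, Matrix.of_apply] at h
    have h2 : ((∑ i ∈ Finset.Icc 1 (p - 1),
        (-1 : ℤ) ^ (i - 1) * ((BinZ (M ^ i) * BinZ (M ^ (p - i))) x x) : ℤ) : ZMod 2)
        = (((if Even p then 1 else 0 : ℤ)) : ZMod 2) := by rw [h]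
    push_cast at h2
    simp only [show ((-1 : ZMod 2)) = 1 from by decide, one_pow, one_mul] at h2
    rw [h2]
  -- row and column sums (mod 2)
  set R : ℕ → ZMod 2 := fun i => ∑ k, (((BinZ (M ^ i)) x k : ℤ) : ZMod 2) with hRdef
  set C : ℕ → ZMod 2 := fun j => ∑ k, (((BinZ (M ^ j)) k x : ℤ) : ZMod 2) with hCdef
  have hR : ∀ i q : ℕ, γ ≤ q →
      (((BinZ (M ^ i) * BinZ (M ^ q)) x x : ℤ) : ZMod 2) = R i := by
    intro i q hq
    rw [hJ q hq, Matrix.mul_apply]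
    push_cast
    simp [Jmat, hRdef]
  have hC : ∀ i q : ℕ, γ ≤ i →
      (((BinZ (M ^ i) * BinZ (M ^ q)) x x : ℤ) : ZMod 2) = C q := by
    intro i q hi
    rw [hJ i hi, Matrix.mul_apply]
    push_cast
    simp [Jmat, hCdef]
  have hCtop : C (1 + γ) = (n : ZMod 2) := by
    simp [hCdef, hJ (1 + γ) (by omega), Jmat]
  -- the two key equations
  have E1 := key (2 * γ + 2) (by omega)
  have E2 := key (2 * γ + 1) (by omega)
  have hev : Even (2 * γ + 2) := ⟨γ + 1, by ring⟩
  have hodd : ¬ Even (2 * γ + 1) := by simp [Nat.even_add_one, even_two_mul]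
  rw [show 2 * γ + 2 - 1 = 2 * γ + 1 from by omega, if_pos hev] at E1
  rw [show 2 * γ + 1 - 1 = 2 * γ from by omega, if_neg hodd] at E2
  -- evaluate the first sum
  have S1 : (∑ i ∈ Finset.Icc 1 (2 * γ + 1),
        (((BinZ (M ^ i) * BinZ (M ^ (2 * γ + 2 - i))) x x : ℤ) : ZMod 2)) =
      (∑ i ∈ Finset.range γ, R (1 + i)) + ∑ j ∈ Finset.range (γ + 1), C (1 + j) := by
    rw [← Finset.Ico_add_one_right_eq_Icc, Finset.sum_Ico_eq_sum_range,
      show 2 * γ + 1 + 1 - 1 = γ + (γ + 1) from by omega, Finset.sum_range_add]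
    congr 1
    · exact Finset.sum_congr rfl fun i hi => hR (1 + i) _
        (by have := Finset.mem_range.mp hi; omega)
    · rw [← Finset.sum_range_reflect (fun j => C (1 + j)) (γ + 1)]
      refine Finset.sum_congr rfl fun i hi => ?_
      have hi' : i ≤ γ := by
        have := Finset.mem_range.mp hi; omega
      rw [hC (1 + (γ + i)) _ (by omega),
        show 2 * γ + 2 - (1 + (γ + i)) = 1 + (γ + 1 - 1 - i) from by omega]
  have S2 : (∑ i ∈ Finset.Icc 1 (2 * γ),
        (((BinZ (M ^ i) * BinZ (M ^ (2 * γ + 1 - i))) x x : ℤ) : ZMod 2)) =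
      (∑ i ∈ Finset.range γ, R (1 + i)) + ∑ j ∈ Finset.range γ, C (1 + j) := by
    rw [← Finset.Ico_add_one_right_eq_Icc, Finset.sum_Ico_eq_sum_range,
      show 2 * γ + 1 - 1 = γ + γ from by omega, Finset.sum_range_add]
    congr 1
    · exact Finset.sum_congr rfl fun i hi => hR (1 + i) _
        (by have := Finset.mem_range.mp hi; omega)
    · rw [← Finset.sum_range_reflect (fun j => C (1 + j)) γ]
      refine Finset.sum_congr rfl fun i hi => ?_
      have hi' : i < γ := Finset.mem_range.mp hi
      rw [hC (1 + (γ + i)) _ (by omega),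
        show 2 * γ + 1 - (1 + (γ + i)) = 1 + (γ - 1 - i) from by omega]
  rw [S1, Finset.sum_range_succ, hCtop] at E1
  rw [S2] at E2
  -- conclude (n : ZMod 2) = 1
  have hn1 : (n : ZMod 2) = 1 := by
    rw [← add_assoc, E2, zero_add] at E1
    exact E1
  rw [Nat.odd_iff]
  by_contra h
  have h0 : n % 2 = 0 := by omega
  have : (n : ZMod 2) = 0 := by
    obtain ⟨k, hk⟩ : ∃ k, n = 2 * k := ⟨n / 2, by omega⟩
    subst hk; push_cast; ring_nf; simp [show ((2 : ZMod 2)) = 0 from rfl]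
  rw [this] at hn1
  exact absurd hn1 (by decide)
end

section
/- Let P be a level poset and < a vertex shelling order on the vertex set of its underlying digraph. Then for every interval [(u,i),(v,j)] of P, ordering the maximal chains by the lexicographic order of their associated vertex words gives a shelling of the order complex of the open interval. -/
set_option maxHeartbeats 1000000


/-- `c` is a walk of length `m` from `u` to `v` in the digraph with adjacency
matrix `M` (equivalently, a maximal chain of an interval of rank `m` in the level
poset of `M`, labeled by the word of vertices along the walk). -/
def IsWalk {V : Type*} (M : Matrix V V ℕ) (m : ℕ) (u v : V)
    (c : Fin (m + 1) → V) : Prop :=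
  c 0 = u ∧ c (Fin.last m) = v ∧ ∀ k : Fin m, 0 < M (c k.castSucc) (c k.succ)

/-- Lexicographic order on vertex words. -/
def LexLt {V : Type*} [LinearOrder V] {m : ℕ} (c c' : Fin (m + 1) → V) : Prop :=
  ∃ k : Fin (m + 1), (∀ l : Fin (m + 1), l < k → c l = c' l) ∧ c k < c' k

/-- A linear order on the vertex set is a vertex shelling order if for any pair of
walks `v_0 → ⋯ → v_k` and `v_0' → ⋯ → v_k'` of the same length with `v_0 = v_0'`,
`v_k = v_k'` and `v_1' < v_1`, there are `j ∈ [1,k-1]` and `w < v_j` with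
`v_{j-1} → w` and `w → v_{j+1}` edges. -/
def IsVertexShellingOrder {V : Type*} [LinearOrder V] (M : Matrix V V ℕ) : Prop :=
  ∀ (k : ℕ) (w w' : ℕ → V), 0 < k →
    (∀ l : ℕ, l < k → 0 < M (w l) (w (l + 1))) →
    (∀ l : ℕ, l < k → 0 < M (w' l) (w' (l + 1))) →
    w 0 = w' 0 → w k = w' k → w' 1 < w 1 →
    ∃ j : ℕ, 1 ≤ j ∧ j < k ∧ ∃ x : V, x < w j ∧
      0 < M (w (j - 1)) x ∧ 0 < M x (w (j + 1))

/-- If `<` is a vertex shelling order, then in every interval `[(u,i),(v,j)]` of the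
level poset, ordering maximal chains (= walks) lexicographically is a shelling of the
order complex: every facet `c` preceded by `c'` is preceded by a facet `c''` meeting
`c` in a codimension-one face that contains `c ∩ c'`. -/
theorem vertexShellingOrder_gives_shelling {V : Type*} [Fintype V] [DecidableEq V]
    [LinearOrder V] (M : Matrix V V ℕ) (hbin : ∀ u v, M u v ≤ 1)
    (hvso : IsVertexShellingOrder M)
    (i j : ℤ) (hij : i < j) (m : ℕ) (hm : (m : ℤ) = j - i) (u v : V)
    (c c' : Fin (m + 1) → V) (hc : IsWalk M m u v c) (hc' : IsWalk M m u v c')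
    (hlt : LexLt c' c) :
    ∃ c'' : Fin (m + 1) → V, IsWalk M m u v c'' ∧ LexLt c'' c ∧
      (∃ l : Fin (m + 1), 0 < (l : ℕ) ∧ (l : ℕ) < m ∧ c'' l ≠ c l ∧
        ∀ k : Fin (m + 1), k ≠ l → c'' k = c k) ∧
      (∀ k : Fin (m + 1), c' k = c k → c'' k = c k) := by
  classical
  obtain ⟨hc0, hcl, hce⟩ := hc
  obtain ⟨hc'0, hc'l, hc'e⟩ := hc'
  obtain ⟨k, hkpre, hklt⟩ := hlt
  have cext : ∀ {f : Fin (m+1) → V} (a b : ℕ) (ha : a < m+1) (hb : b < m+1),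
      a = b → f ⟨a, ha⟩ = f ⟨b, hb⟩ := by
    rintro f a b ha hb rfl; rfl
  set k₀ := (k : ℕ) with hk₀
  have hce' : ∀ a (h : a < m), 0 < M (c ⟨a, by omega⟩) (c ⟨a+1, by omega⟩) :=
    fun a h => hce ⟨a, h⟩
  have hc'e' : ∀ a (h : a < m), 0 < M (c' ⟨a, by omega⟩) (c' ⟨a+1, by omega⟩) :=
    fun a h => hc'e ⟨a, h⟩
  have hk1 : 1 ≤ k₀ := by
    rcases Nat.eq_zero_or_pos k₀ with h | h
    · exfalso
      have hk0 : k = (0 : Fin (m+1)) := Fin.ext (by simp only [Fin.val_zero]; exact h)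
      rw [hk0, hc0, hc'0] at hklt
      exact lt_irrefl _ hklt
    · exact h
  have hkm : k₀ < m := by
    rcases eq_or_lt_of_le (Nat.le_of_lt_succ k.isLt) with h | h
    · exfalso
      have hkl : k = Fin.last m := Fin.ext h
      rw [hkl, hc'l, hcl] at hklt
      exact lt_irrefl _ hklt
    · exact h
  -- first index > k₀ where c and c' agree
  have hex : ∃ n, k₀ < n ∧ n ≤ m ∧
      c' ⟨min n m, by omega⟩ = c ⟨min n m, by omega⟩ := by
    refine ⟨m, hkm, le_rfl, ?_⟩
    have h1 : c' ⟨min m m, by omega⟩ = c' (Fin.last m) := cext _ _ _ _ (by omega)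
    have h2 : c ⟨min m m, by omega⟩ = c (Fin.last m) := cext _ _ _ _ (by omega)
    rw [h1, h2, hc'l, hcl]
  obtain ⟨p, hpk, hpm, hpp, hpmin⟩ : ∃ p, k₀ < p ∧ ∃ hpm : p ≤ m,
      c' ⟨p, by omega⟩ = c ⟨p, by omega⟩ ∧
      ∀ q (h1 : k₀ < q) (h2 : q < p), c' ⟨q, by omega⟩ ≠ c ⟨q, by omega⟩ := by
    obtain ⟨h1, h2, h3⟩ := Nat.find_spec hex
    refine ⟨Nat.find hex, h1, h2, ?_, ?_⟩
    · exact (cext _ _ _ _ (by omega)).symm.trans (h3.trans (cext _ _ _ _ (by omega)))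
    · intro q hq1 hq2 hEq
      exact Nat.find_min hex hq2 ⟨hq1, by omega,
        (cext _ _ _ _ (by omega)).trans (hEq.trans (cext _ _ _ _ (by omega)))⟩
  obtain ⟨w, hwe⟩ : ∃ w : ℕ → V, ∀ l (h : k₀ - 1 + l ≤ m),
      w l = c ⟨k₀ - 1 + l, by omega⟩ :=
    ⟨fun l => c ⟨min (k₀ - 1 + l) m, Nat.lt_succ_of_le (Nat.min_le_right _ _)⟩,
     fun l h => cext _ _ _ _ (by omega)⟩
  obtain ⟨w', hw'e⟩ : ∃ w' : ℕ → V, ∀ l (h : k₀ - 1 + l ≤ m),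
      w' l = c' ⟨k₀ - 1 + l, by omega⟩ :=
    ⟨fun l => c' ⟨min (k₀ - 1 + l) m, Nat.lt_succ_of_le (Nat.min_le_right _ _)⟩,
     fun l h => cext _ _ _ _ (by omega)⟩
  obtain ⟨K, hKdef⟩ : ∃ K, K = p - k₀ + 1 := ⟨_, rfl⟩
  have hK0 : 0 < K := by omega
  have hedge : ∀ l, l < K → 0 < M (w l) (w (l + 1)) := by
    intro l hl
    have h1 : k₀ - 1 + l < m := by omega
    rw [hwe l (by omega), hwe (l+1) (by omega)]
    have := hce' (k₀ - 1 + l) h1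
    have e : c ⟨k₀ - 1 + (l+1), by omega⟩ = c ⟨(k₀ - 1 + l) + 1, by omega⟩ :=
      cext _ _ _ _ (by omega)
    rw [e]; exact this
  have hedge' : ∀ l, l < K → 0 < M (w' l) (w' (l + 1)) := by
    intro l hl
    have h1 : k₀ - 1 + l < m := by omega
    rw [hw'e l (by omega), hw'e (l+1) (by omega)]
    have := hc'e' (k₀ - 1 + l) h1
    have e : c' ⟨k₀ - 1 + (l+1), by omega⟩ = c' ⟨(k₀ - 1 + l) + 1, by omega⟩ :=
      cext _ _ _ _ (by omega)
    rw [e]; exact this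
  have h0 : w 0 = w' 0 := by
    rw [hwe 0 (by omega), hw'e 0 (by omega)]
    exact (hkpre ⟨k₀ - 1 + 0, by omega⟩ (by simp [Fin.lt_def]; omega)).symm
  have hKK : w K = w' K := by
    have hKp : k₀ - 1 + K = p := by omega
    rw [hwe K (by omega), hw'e K (by omega)]
    rw [cext (f := c) _ p _ (by omega) hKp, cext (f := c') _ p _ (by omega) hKp]
    exact hpp.symm
  have h1 : w' 1 < w 1 := by
    rw [hwe 1 (by omega), hw'e 1 (by omega)]
    have ek : (⟨k₀ - 1 + 1, by omega⟩ : Fin (m+1)) = k := Fin.ext (by simp [hk₀]; omega)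
    rw [ek]; exact hklt
  obtain ⟨jj, hj1, hjK, x, hx, hedg1, hedg2⟩ := hvso K w w' hK0 hedge hedge' h0 hKK h1
  set l₀ := k₀ - 1 + jj with hl₀
  have hl₀k : k₀ ≤ l₀ := by omega
  have hl₀p : l₀ < p := by omega
  have hl₀m : l₀ < m := by omega
  have hl₀1 : 1 ≤ l₀ := by omega
  have hl₀m1 : l₀ < m + 1 := by omega
  have hMcong : ∀ {a b a' b' : V}, a = a' → b = b' → 0 < M a' b' → 0 < M a b := by
    rintro a b a' b' rfl rfl h; exact h
  have hwj : w jj = c ⟨l₀, hl₀m1⟩ :=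
    (hwe jj (by omega)).trans (cext _ _ _ _ (by omega))
  have hxc : x < c ⟨l₀, hl₀m1⟩ := lt_of_lt_of_eq hx hwj
  have hwm1 : w (jj - 1) = c ⟨l₀ - 1, by omega⟩ :=
    (hwe (jj - 1) (by omega)).trans (cext _ _ _ _ (by omega))
  have hwp1 : w (jj + 1) = c ⟨l₀ + 1, by omega⟩ :=
    (hwe (jj + 1) (by omega)).trans (cext _ _ _ _ (by omega))
  have hedg1' : 0 < M (c ⟨l₀ - 1, by omega⟩) x := hMcong hwm1.symm rfl hedg1
  have hedg2' : 0 < M x (c ⟨l₀ + 1, by omega⟩) := hMcong rfl hwp1.symm hedg2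
  -- c' and c differ at l₀
  have hcne : c' ⟨l₀, hl₀m1⟩ ≠ c ⟨l₀, hl₀m1⟩ := by
    rcases eq_or_lt_of_le hl₀k with h | h
    · have hLk : (⟨l₀, hl₀m1⟩ : Fin (m+1)) = k := Fin.ext (by simp [hk₀]; omega)
      rw [hLk]; exact ne_of_lt hklt
    · intro hEq
      exact hpmin l₀ h hl₀p (hEq.trans (cext _ _ _ _ rfl))
  refine ⟨Function.update c ⟨l₀, hl₀m1⟩ x, ⟨?_, ?_, ?_⟩, ?_, ?_, ?_⟩
  · exact (Function.update_of_ne (by simp [Fin.ext_iff]; omega) _ _).trans hc0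
  · exact (Function.update_of_ne (by simp [Fin.ext_iff, Fin.last]; omega) _ _).trans hcl
  · intro t
    by_cases hA : (t : ℕ) = l₀
    · have e1 : Function.update c ⟨l₀, hl₀m1⟩ x t.castSucc = x :=
        (congrArg _ (Fin.ext (show (t.castSucc : ℕ) = ((⟨l₀, hl₀m1⟩ : Fin (m+1)) : ℕ) from hA))).trans
          (Function.update_self _ _ _)
      have e2 : Function.update c ⟨l₀, hl₀m1⟩ x t.succ = c ⟨l₀ + 1, by omega⟩ :=
        (Function.update_of_ne (by simp [Fin.ext_iff]; omega) _ _).trans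
          (cext _ _ t.succ.isLt _ (by simp; omega))
      exact hMcong e1 e2 hedg2'
    · by_cases hB : (t : ℕ) + 1 = l₀
      · have e1 : Function.update c ⟨l₀, hl₀m1⟩ x t.castSucc = c ⟨l₀ - 1, by omega⟩ :=
          (Function.update_of_ne (by simp [Fin.ext_iff]; omega) _ _).trans
            (cext _ _ t.castSucc.isLt _ (by simp; omega))
        have e2 : Function.update c ⟨l₀, hl₀m1⟩ x t.succ = x :=
          (congrArg _ (Fin.ext (show (t.succ : ℕ) = ((⟨l₀, hl₀m1⟩ : Fin (m+1)) : ℕ) by simp; omega))).trans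
            (Function.update_self _ _ _)
        exact hMcong e1 e2 hedg1'
      · have e1 : Function.update c ⟨l₀, hl₀m1⟩ x t.castSucc = c t.castSucc :=
          Function.update_of_ne (by simp [Fin.ext_iff]; omega) _ _
        have e2 : Function.update c ⟨l₀, hl₀m1⟩ x t.succ = c t.succ :=
          Function.update_of_ne (by simp [Fin.ext_iff]; omega) _ _
        exact hMcong e1 e2 (hce t)
  · refine ⟨⟨l₀, hl₀m1⟩, fun t ht => Function.update_of_ne (Fin.ne_of_lt ht) _ _, ?_⟩
    exact lt_of_eq_of_lt (Function.update_self _ _ _) hxc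
  · refine ⟨⟨l₀, hl₀m1⟩, by show 0 < l₀; omega, hl₀m, ?_, ?_⟩
    · exact fun h => ne_of_lt hxc ((Function.update_self _ _ _).symm.trans h)
    · intro t ht; exact Function.update_of_ne ht _ _
  · intro t ht
    by_cases h : t = ⟨l₀, hl₀m1⟩
    · exact absurd (h ▸ ht) hcne
    · exact Function.update_of_ne h _ _
end

section
/- Let G be the underlying digraph of the level poset of an indecomposable n×n matrix M with period d and index γ. A linear order on the vertices of G is a vertex shelling order if and only if the vertex shelling order condition holds for all pairs of walks of length k ≤ γ + d. -/
/-- The vertex shelling order condition for walks of length exactly `k`. -/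
def VSOCond {V : Type*} [LinearOrder V] (M : Matrix V V ℕ) (k : ℕ) : Prop :=
  ∀ w w' : ℕ → V, 0 < k →
    (∀ l : ℕ, l < k → 0 < M (w l) (w (l + 1))) →
    (∀ l : ℕ, l < k → 0 < M (w' l) (w' (l + 1))) →
    w 0 = w' 0 → w k = w' k → w' 1 < w 1 →
    ∃ j : ℕ, 1 ≤ j ∧ j < k ∧ ∃ x : V, x < w j ∧
      0 < M (w (j - 1)) x ∧ 0 < M x (w (j + 1))

section Aux

variable {V : Type*} [Fintype V] [DecidableEq V] [LinearOrder V]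

lemma binN_pos_iff {A B : Matrix V V ℕ} (h : BinN A = BinN B) (u v : V) :
    0 < A u v ↔ 0 < B u v := by
  have h2 := congrFun (congrFun h u) v
  simp only [BinN, Matrix.of_apply] at h2
  by_cases hA : 0 < A u v <;> by_cases hB : 0 < B u v <;> simp [hA, hB] at h2 ⊢

lemma pow_pos_comp (M : Matrix V V ℕ) {s t : ℕ} {u z v : V}
    (h1 : 0 < (M ^ s) u z) (h2 : 0 < (M ^ t) z v) : 0 < (M ^ (s + t)) u v := by
  rw [pow_add, Matrix.mul_apply]
  exact Finset.sum_pos' (fun i _ => Nat.zero_le _)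
    ⟨z, Finset.mem_univ z, Nat.mul_pos h1 h2⟩

lemma walk_pow (M : Matrix V V ℕ) :
    ∀ (m : ℕ) (q : ℕ → V), (∀ l, l < m → 0 < M (q l) (q (l + 1))) →
      0 < (M ^ m) (q 0) (q m) := by
  intro m
  induction m with
  | zero => intro q _; simp [Matrix.one_apply]
  | succ m ih =>
      intro q hq
      have h1 : 0 < (M ^ m) (q 0) (q m) := ih q (fun l hl => hq l (by omega))
      have h2 : 0 < M (q m) (q (m + 1)) := hq m (by omega)
      exact pow_pos_comp (s := m) (t := 1) M h1 (by rwa [pow_one])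

lemma pow_extract (M : Matrix V V ℕ) :
    ∀ (t : ℕ) (u v : V), 0 < (M ^ t) u v →
      ∃ p : ℕ → V, p 0 = u ∧ p t = v ∧ ∀ l, l < t → 0 < M (p l) (p (l + 1)) := by
  intro t
  induction t with
  | zero =>
      intro u v h
      simp only [pow_zero, Matrix.one_apply] at h
      by_cases huv : u = v
      · exact ⟨fun _ => u, rfl, huv, fun l hl => by omega⟩
      · simp [huv] at h
  | succ t ih =>
      intro u v h
      rw [pow_succ, Matrix.mul_apply] at h
      obtain ⟨z, _, hz⟩ : ∃ z ∈ Finset.univ, 0 < (M ^ t) u z * M z v := by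
        by_contra hc
        push_neg at hc
        have hs : ∑ j, (M ^ t) u j * M j v = 0 :=
          Finset.sum_eq_zero (fun j hj => by
            have := hc j (Finset.mem_univ j); omega)
        omega
      have h1 : 0 < (M ^ t) u z := Nat.pos_of_ne_zero (fun h0 => by simp [h0] at hz)
      have h2 : 0 < M z v := Nat.pos_of_ne_zero (fun h0 => by simp [h0] at hz)
      obtain ⟨p, hp0, hpt, hpe⟩ := ih u z h1
      refine ⟨fun l => if l ≤ t then p l else v, by simp [hp0], by simp, ?_⟩
      intro l hl
      by_cases hlt : l < t
      · simpa [Nat.le_of_lt hlt, Nat.succ_le_of_lt hlt] using hpe l hlt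
      · have hl' : l = t := by omega
        subst hl'
        simpa [hpt] using h2

lemma loop_mul (M : Matrix V V ℕ) {L : ℕ} {z : V} (h : 0 < (M ^ L) z z) :
    ∀ m : ℕ, 0 < (M ^ (m * L)) z z := by
  intro m
  induction m with
  | zero => simp [Matrix.one_apply]
  | succ m ih =>
      have := pow_pos_comp M ih h
      rwa [show m * L + L = (m + 1) * L by ring] at this

variable (M : Matrix V V ℕ) (d γ : ℕ)

lemma per_all (hper : ∀ t : ℕ, γ ≤ t → BinN (M ^ (t + d)) = BinN (M ^ t)) :
    ∀ t, γ ≤ t → ∀ m, BinN (M ^ (t + d * m)) = BinN (M ^ t) := by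
  intro t ht m
  induction m with
  | zero => simp
  | succ m ih =>
      have h1 := hper (t + d * m) (by omega)
      rw [show t + d * (m + 1) = t + d * m + d by ring, h1, ih]

lemma per_pos (hper : ∀ t : ℕ, γ ≤ t → BinN (M ^ (t + d)) = BinN (M ^ t))
    {t1 t2 : ℕ} (h1 : γ ≤ t1) (hle : t1 ≤ t2) (hm : t1 ≡ t2 [MOD d]) (u v : V) :
    0 < (M ^ t2) u v ↔ 0 < (M ^ t1) u v := by
  obtain ⟨m, hm2⟩ := (Nat.modEq_iff_dvd' hle).mp hm
  have ht2 : t2 = t1 + d * m := by omega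
  subst ht2
  exact binN_pos_iff (per_all M d γ hper t1 h1 m) u v

lemma closed_dvd (hd : 0 < d)
    (hInd : ∀ u v : V, ∃ t : ℕ, 0 < t ∧ 0 < (M ^ t) u v)
    (hper : ∀ t : ℕ, γ ≤ t → BinN (M ^ (t + d)) = BinN (M ^ t))
    (hdmin : ∀ d' : ℕ, 0 < d' →
      (∃ γ' : ℕ, ∀ t : ℕ, γ' ≤ t → BinN (M ^ (t + d')) = BinN (M ^ t)) → d ≤ d')
    (z : V) (L : ℕ) (hL : 0 < L) (hzz : 0 < (M ^ L) z z) : d ∣ L := by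
  set g := Nat.gcd d L with hg
  -- find b < d with b * L ≡ g [MOD d]
  obtain ⟨b, hbd, hbL⟩ : ∃ b : ℕ, b < d ∧ b * L ≡ g [MOD d] := by
    set A := Nat.gcdA d L
    set B := Nat.gcdB d L
    have key : (g : ℤ) = d * A + L * B := Nat.gcd_eq_gcd_ab d L
    have hdz : (d : ℤ) ≠ 0 := by exact_mod_cast hd.ne'
    refine ⟨(B % (d : ℤ)).toNat, ?_, ?_⟩
    · have hnn : 0 ≤ B % (d : ℤ) := Int.emod_nonneg B hdz
      have hlt : B % (d : ℤ) < d := Int.emod_lt_of_pos B (by exact_mod_cast hd)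
      omega
    · rw [← Int.natCast_modEq_iff]
      have hnn : 0 ≤ B % (d : ℤ) := Int.emod_nonneg B hdz
      have hcast : ((B % (d : ℤ)).toNat : ℤ) = B % (d : ℤ) := Int.toNat_of_nonneg hnn
      push_cast
      rw [hcast]
      calc B % (d : ℤ) * L ≡ B * L [ZMOD (d:ℤ)] :=
            Int.ModEq.mul_right L (Int.emod_emod_of_dvd B dvd_rfl)
        _ ≡ (g : ℤ) [ZMOD (d:ℤ)] := by
            rw [Int.modEq_iff_dvd]
            exact ⟨A, by linarith [key]⟩
  -- the key claim: g is an eventual period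
  have claim : ∀ t, γ ≤ t → ∀ x y : V, (0 < (M ^ (t + g)) x y ↔ 0 < (M ^ t) x y) := by
    intro t ht x y
    obtain ⟨a, ha0, haz⟩ := hInd y z
    obtain ⟨a', ha'0, ha'z⟩ := hInd z y
    -- loops at y of length a + m*L + a' + n*(a+a')
    have eloop : 0 < (M ^ (a + a')) y y := pow_pos_comp M haz ha'z
    have bigloop : ∀ n m : ℕ, 0 < (M ^ (a + m * L + a' + n * (a + a'))) y y := by
      intro n m
      have l1 : 0 < (M ^ (m * L)) z z := loop_mul M hzz m
      have l2 : 0 < (M ^ (a + m * L)) y z := pow_pos_comp M haz l1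
      have l3 : 0 < (M ^ (a + m * L + a')) y y := pow_pos_comp M l2 ha'z
      have l4 : 0 < (M ^ (n * (a + a'))) y y := loop_mul M eloop n
      exact pow_pos_comp M l3 l4
    obtain ⟨d', hd'⟩ : ∃ d', d = d' + 1 := ⟨d - 1, by omega⟩
    have hgd : g ∣ d := Nat.gcd_dvd_left d L
    have hgle : g ≤ d := Nat.le_of_dvd hd hgd
    constructor
    · -- backward: from t + g positivity to t, by adding loop with m = d - b
      intro hpos
      set c := d - b with hc
      have hcL : (g + c * L) ≡ 0 [MOD d] := by
        have h1 : (g + c * L) + b * L ≡ (g + c * L) + g [MOD d] :=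
          Nat.ModEq.add_left _ hbL
        have h2 : (g + c * L) + b * L = g + d * L := by
          have : c + b = d := by omega
          calc g + c * L + b * L = g + (c + b) * L := by ring
            _ = g + d * L := by rw [this]
        have h3 : g + d * L ≡ g [MOD d] := by
          simp [Nat.ModEq, Nat.add_mul_mod_self_left]
        have h4 : (g + c * L) + g ≡ g [MOD d] := by
          calc (g + c * L) + g ≡ (g + c * L) + b * L [MOD d] := h1.symm
            _ = g + d * L := h2
            _ ≡ g [MOD d] := h3
        have h5 : (g + c * L) + g ≡ 0 + g [MOD d] := by simpa using h4
        exact Nat.ModEq.add_right_cancel' g h5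
      set E := a + c * L + a' + d' * (a + a') with hE
      have hEbig : 0 < (M ^ ((t + g) + E)) x y := pow_pos_comp M hpos (bigloop d' c)
      have hmod : t ≡ (t + g) + E [MOD d] := by
        have hE2 : (t + g) + E = t + (g + c * L) + d * (a + a') := by
          rw [hE, hd']; ring
        rw [hE2]
        calc t ≡ t + 0 [MOD d] := by rw [Nat.add_zero]
          _ ≡ t + (g + c * L) [MOD d] := Nat.ModEq.add_left t hcL.symm
          _ ≡ t + (g + c * L) + d * (a + a') [MOD d] := by
              simp [Nat.ModEq, Nat.add_mul_mod_self_left]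
      exact ((per_pos M d γ hper ht (by omega) hmod x y).mp hEbig)
    · -- forward: from t positivity to t + g, by adding loop with m = b
      intro hpos
      have h5 : d' ≤ d' * (a + a') := Nat.le_mul_of_pos_right d' (by omega)
      set E := a + b * L + a' + d' * (a + a') with hE
      have hEbig : 0 < (M ^ (t + E)) x y := pow_pos_comp M hpos (bigloop d' b)
      have hmod : t + g ≡ t + E [MOD d] := by
        have hE2 : t + E = t + b * L + d * (a + a') := by
          rw [hE, hd']; ring
        rw [hE2]
        calc t + g ≡ t + b * L [MOD d] := Nat.ModEq.add_left t hbL.symm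
          _ ≡ t + b * L + d * (a + a') [MOD d] := by
              simp [Nat.ModEq, Nat.add_mul_mod_self_left]
      exact ((per_pos M d γ hper (by omega) (by omega) hmod x y).mp hEbig)
  -- g is a valid period, so d ≤ g
  have hgper : ∀ t, γ ≤ t → BinN (M ^ (t + g)) = BinN (M ^ t) := by
    intro t ht
    ext x y
    simp only [BinN, Matrix.of_apply]
    exact if_congr (claim t ht x y) rfl rfl
  have hgpos : 0 < g := Nat.gcd_pos_of_pos_left L hd
  have hdg : d ≤ g := hdmin g hgpos ⟨γ, hgper⟩
  have hgd : g ∣ d := Nat.gcd_dvd_left d L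
  have : g = d := le_antisymm (Nat.le_of_dvd hd hgd) hdg
  rw [← this]
  exact Nat.gcd_dvd_right d L

end Aux

/-- Let `M` be an indecomposable matrix with period `d` and index `γ`.  A linear order
on the vertices is a vertex shelling order (the condition holds for every pair of
walks) iff the vertex shelling order condition holds for walks of length `k ≤ γ + d`. -/
theorem vertexShellingOrder_bounded_check {V : Type*} [Fintype V] [DecidableEq V]
    [LinearOrder V] (M : Matrix V V ℕ) (hbin : ∀ u v, M u v ≤ 1)
    (hInd : ∀ u v : V, ∃ t : ℕ, 0 < t ∧ 0 < (M ^ t) u v)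
    (d γ : ℕ) (hd : 0 < d) (hγ : 0 < γ)
    (hper : ∀ t : ℕ, γ ≤ t → BinN (M ^ (t + d)) = BinN (M ^ t))
    (hγmin : ∀ γ' : ℕ, (∀ t : ℕ, γ' ≤ t → BinN (M ^ (t + d)) = BinN (M ^ t)) → γ ≤ γ')
    (hdmin : ∀ d' : ℕ, 0 < d' →
      (∃ γ' : ℕ, ∀ t : ℕ, γ' ≤ t → BinN (M ^ (t + d')) = BinN (M ^ t)) → d ≤ d') :
    (∀ k : ℕ, VSOCond M k) ↔ (∀ k : ℕ, k ≤ γ + d → VSOCond M k) := by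
  constructor
  · intro h k _
    exact h k
  · intro h k
    induction k using Nat.strong_induction_on with
    | _ k IH =>
      by_cases hk : k ≤ γ + d
      · exact h k hk
      · push_neg at hk
        intro w w' hk0 hw hw' h0 hke h1
        obtain ⟨K, rfl⟩ : ∃ K, k = K + d + 1 := ⟨k - d - 1, by omega⟩
        have hKγ : γ ≤ K := by omega
        -- walk from w' 1 to w (K + d + 1) of length K + d
        have A1 : 0 < (M ^ (K + d)) (w' 1) (w (K + d + 1)) := by
          have := walk_pow M (K + d) (fun l => w' (l + 1))
            (fun l hl => hw' (l + 1) (by omega))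
          simpa [← hke] using this
        -- walk from w 1 to w (K + 1) of length K
        have A2 : 0 < (M ^ K) (w 1) (w (K + 1)) := by
          have := walk_pow M K (fun l => w (l + 1))
            (fun l hl => hw (l + 1) (by omega))
          simpa using this
        have A3 : 0 < (M ^ 1) (w 0) (w' 1) := by
          rw [pow_one, h0]
          exact hw' 0 (by omega)
        have A3' : 0 < (M ^ 1) (w 0) (w 1) := by
          rw [pow_one]
          exact hw 0 (by omega)
        obtain ⟨a, ha0, A4⟩ := hInd (w (K + d + 1)) (w 0)
        -- closed walk at w 0 of length 1 + (K + d) + a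
        have C : 0 < (M ^ (1 + (K + d) + a)) (w 0) (w 0) :=
          pow_pos_comp M (pow_pos_comp M A3 A1) A4
        have hdvd : d ∣ 1 + (K + d) + a :=
          closed_dvd M d γ hd hInd hper hdmin (w 0) _ (by omega) C
        -- long walk from w' 1 to w (K + 1)
        have B0 : 0 < (M ^ (K + d + a + 1 + K)) (w' 1) (w (K + 1)) :=
          pow_pos_comp M (pow_pos_comp M (pow_pos_comp M A1 A4) A3') A2
        have hmod : K ≡ K + d + a + 1 + K [MOD d] := by
          apply (Nat.modEq_iff_dvd' (by omega)).mpr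
          have : K + d + a + 1 + K - K = 1 + (K + d) + a := by omega
          rw [this]
          exact hdvd
        have B : 0 < (M ^ K) (w' 1) (w (K + 1)) :=
          (per_pos M d γ hper hKγ (by omega) hmod (w' 1) (w (K + 1))).mp B0
        obtain ⟨p, hp0, hpK, hpe⟩ := pow_extract M K (w' 1) (w (K + 1)) B
        -- the competitor walk of length K + 1
        set u' : ℕ → V := fun l => if l = 0 then w 0 else p (l - 1) with hu'
        have hcond := IH (K + 1) (by omega) w u' (by omega)
          (fun l hl => hw l (by omega))
          (fun l hl => by
            by_cases hl0 : l = 0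
            · subst hl0
              simp only [hu']
              simpa [hp0, h0] using hw' 0 (by omega)
            · have h1l : 1 ≤ l := by omega
              simp only [hu', if_neg hl0, if_neg (by omega : ¬ l + 1 = 0)]
              have := hpe (l - 1) (by omega)
              have heq : l - 1 + 1 = l := by omega
              rw [heq] at this
              have heq2 : l + 1 - 1 = l := by omega
              rw [heq2]
              exact this)
          (by simp [hu'])
          (by simp [hu', hpK])
          (by simpa [hu', hp0] using h1)
        obtain ⟨j, hj1, hjK, x, hx, he1, he2⟩ := hcond
        exact ⟨j, hj1, by omega, x, hx, he1, he2⟩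
end

section
/- For a level poset with underlying matrix M, the matrix Ψ of ab-series satisfies Ψ = K(a−b) · (I − b·K(a−b))^{-1}, where K(t) = ∑_{m≥0} Bin(M^{m+1}) t^m; in particular each entry Ψ_{x,y} is a rational noncommutative power series in a and b. -/
noncomputable section

/-- The free (noncommutative) algebra `ℝ⟨a,b⟩`; `true` encodes `a`, `false` encodes `b`. -/
abbrev NCab : Type := FreeAlgebra ℝ Bool

/-- The variable `a`. -/
def va : NCab := FreeAlgebra.ι ℝ true

/-- The variable `b`. -/
def vb : NCab := FreeAlgebra.ι ℝ false

variable {V : Type*} [Fintype V] [DecidableEq V]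

/-- The `m`-th coefficient matrix of `K(t) = ∑_{m≥0} Bin(M^{m+1}) t^m`, evaluated at
`t = a - b`:  `(K m) u v = (a-b)^m` when there is a walk of length `m+1` from `u` to
`v`, and `0` otherwise. -/
def Kab (M : Matrix V V ℕ) (m : ℕ) : Matrix V V NCab :=
  Matrix.of fun u v => if 0 < (M ^ (m + 1)) u v then (va - vb) ^ m else 0

/-- The chains of the interval `[(u,0),(v,m+1)]` of the level poset of `M` with `k+1`
steps: a composition `α` of `m+1` into `k+1` positive parts (the rank jumps) together
with the vertices `w : Fin (k+2) → V` visited, consecutive ones joined by walks. -/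
def chainSet (M : Matrix V V ℕ) (m k : ℕ) (u v : V) :
    Finset ((Fin (k + 1) → Fin (m + 2)) × (Fin (k + 2) → V)) :=
  Finset.univ.filter fun p =>
    (∀ i, 1 ≤ (p.1 i : ℕ)) ∧ (∑ i, (p.1 i : ℕ)) = m + 1 ∧
    p.2 0 = u ∧ p.2 (Fin.last (k + 1)) = v ∧
    ∀ i : Fin (k + 1), 0 < (M ^ (p.1 i : ℕ)) (p.2 i.castSucc) (p.2 i.succ)

/-- The weight of a chain: `(a-b)^{ρ-1} b (a-b)^{ρ-1} b ⋯ b (a-b)^{ρ-1}`. -/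
def chainWt {m k : ℕ} (p : (Fin (k + 1) → Fin (m + 2)) × (Fin (k + 2) → V)) : NCab :=
  (List.ofFn fun i : Fin (k + 1) =>
    (va - vb) ^ ((p.1 i : ℕ) - 1) * (if (i : ℕ) < k then vb else 1)).prod

/-- The degree-`m` homogeneous component of the matrix `Ψ` of `ab`-series of the level
poset of `M`: the `(u,v)` entry is the degree-`m` part of
`∑_{m'≥0} Ψ([(u,0),(v,m'+1)])`, i.e. the chain-weight sum over all chains of the
interval `[(u,0),(v,m+1)]`. -/
def PsiMat (M : Matrix V V ℕ) (m : ℕ) : Matrix V V NCab :=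
  Matrix.of fun u v =>
    ∑ k ∈ Finset.range (m + 1), ∑ p ∈ chainSet M m k u v, chainWt p

/- ---------- auxiliary ---------- -/

lemma mem_chainSet {M : Matrix V V ℕ} {m k : ℕ} {u v : V}
    {p : (Fin (k + 1) → Fin (m + 2)) × (Fin (k + 2) → V)} :
    p ∈ chainSet M m k u v ↔
      (∀ i, 1 ≤ (p.1 i : ℕ)) ∧ (∑ i, (p.1 i : ℕ)) = m + 1 ∧
      p.2 0 = u ∧ p.2 (Fin.last (k + 1)) = v ∧
      ∀ i : Fin (k + 1), 0 < (M ^ (p.1 i : ℕ)) (p.2 i.castSucc) (p.2 i.succ) := by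
  unfold chainSet
  rw [Finset.mem_filter]
  simp only [Finset.mem_univ, true_and]

lemma chainSet_eq_empty {M : Matrix V V ℕ} {m k : ℕ} {u v : V} (h : m < k) :
    chainSet M m k u v = ∅ := by
  ext p
  simp only [mem_chainSet, Finset.notMem_empty, iff_false]
  rintro ⟨h1, h2, -⟩
  have : (k + 1) * 1 ≤ ∑ i : Fin (k + 1), (p.1 i : ℕ) := by
    calc (k + 1) * 1 = ∑ _i : Fin (k + 1), 1 := by simp
    _ ≤ _ := Finset.sum_le_sum fun i _ => h1 i
  omega

lemma T_zero (M : Matrix V V ℕ) (m : ℕ) (u v : V) :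
    ∑ p ∈ chainSet M m 0 u v, chainWt p = Kab M m u v := by
  unfold Kab
  rw [Matrix.of_apply]
  by_cases hc : 0 < (M ^ (m + 1)) u v
  · rw [if_pos hc]
    have hset : chainSet M m 0 u v =
        {((fun _ => (⟨m + 1, by omega⟩ : Fin (m + 2))), ![u, v])} := by
      ext p
      simp only [mem_chainSet, Finset.mem_singleton]
      constructor
      · rintro ⟨h1, h2, h3, h4, h5⟩
        have hsum : (p.1 0 : ℕ) = m + 1 := by
          simpa [Fin.sum_univ_one] using h2
        have hp1 : p.1 = fun _ => (⟨m + 1, by omega⟩ : Fin (m + 2)) := by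
          funext i
          have : i = 0 := by omega
          subst this
          exact Fin.ext hsum
        have hp2 : p.2 = ![u, v] := by
          funext j
          fin_cases j
          · simpa using h3
          · simpa [Fin.last] using h4
        exact Prod.ext hp1 hp2
      · rintro rfl
        refine ⟨fun i => by simp, by simp [Fin.sum_univ_one], rfl, rfl, fun i => ?_⟩
        have : i = 0 := by omega
        subst this
        simpa using hc
    rw [hset, Finset.sum_singleton]
    simp [chainWt]
  · rw [if_neg hc]
    have hset : chainSet M m 0 u v = ∅ := by
      ext p
      simp only [mem_chainSet, Finset.notMem_empty, iff_false]
      rintro ⟨h1, h2, h3, h4, h5⟩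
      have hsum : (p.1 0 : ℕ) = m + 1 := by
        simpa [Fin.sum_univ_one] using h2
      have := h5 0
      rw [hsum] at this
      have h0 : (0 : Fin 1).castSucc = 0 := rfl
      have h1' : (0 : Fin 1).succ = Fin.last 1 := rfl
      rw [h0, h1', h3, h4] at this
      exact hc this
    rw [hset, Finset.sum_empty]

/-- numeric facts about members of a fiber -/
lemma fiber_facts {M : Matrix V V ℕ} {m k : ℕ} {u v w : V} {i : ℕ}
    {p : (Fin (k + 2) → Fin (m + 2)) × (Fin (k + 3) → V)}
    (hp : p ∈ (chainSet M m (k + 1) u v).filter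
        (fun p => (((p.1 0 : ℕ) - 1 : ℕ), p.2 1) = (i, w))) :
    (p.1 0 : ℕ) = i + 1 ∧ i < m ∧
      (∑ j : Fin (k + 1), (p.1 j.succ : ℕ)) = m - 1 - i + 1 ∧
      (∀ j : Fin (k + 1), (p.1 j.succ : ℕ) < m - 1 - i + 2) ∧
      p.2 1 = w := by
  rw [Finset.mem_filter, mem_chainSet] at hp
  obtain ⟨⟨h1, h2, h3, h4, h5⟩, hfib⟩ := hp
  rw [Prod.mk.injEq] at hfib
  rw [Fin.sum_univ_succ] at h2
  have htail : (k + 1) * 1 ≤ ∑ j : Fin (k + 1), (p.1 j.succ : ℕ) := by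
    calc (k + 1) * 1 = ∑ _j : Fin (k + 1), 1 := by simp
    _ ≤ _ := Finset.sum_le_sum fun j _ => h1 j.succ
  have hge := h1 0
  have hsingle : ∀ j : Fin (k + 1), (p.1 j.succ : ℕ) ≤
      ∑ j' : Fin (k + 1), (p.1 j'.succ : ℕ) :=
    fun j => Finset.single_le_sum (f := fun j' : Fin (k + 1) => (p.1 j'.succ : ℕ))
      (fun j' _ => Nat.zero_le _) (Finset.mem_univ j)
  refine ⟨by omega, by omega, by omega, fun j => ?_, hfib.2⟩
  have := hsingle j
  omega

lemma fiber_sum (M : Matrix V V ℕ) (m k : ℕ) (u v w : V) (i : ℕ) (hi : i < m) :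
    ∑ p ∈ (chainSet M m (k + 1) u v).filter
        (fun p => (((p.1 0 : ℕ) - 1 : ℕ), p.2 1) = (i, w)), chainWt p
    = (if 0 < (M ^ (i + 1)) u w then (va - vb) ^ i else 0) *
        (vb * ∑ q ∈ chainSet M (m - 1 - i) k w v, chainWt q) := by
  by_cases hc : 0 < (M ^ (i + 1)) u w
  · rw [if_pos hc, Finset.mul_sum, Finset.mul_sum]
    refine Finset.sum_bij'
      (i := fun p hp =>
        ((fun j => (⟨(p.1 j.succ : ℕ), (fiber_facts hp).2.2.2.1 j⟩ :
            Fin (m - 1 - i + 2))),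
         fun j => p.2 j.succ))
      (j := fun q hq =>
        ((Fin.cons (⟨i + 1, by omega⟩ : Fin (m + 2))
            (fun j => (⟨(q.1 j : ℕ), by have := (q.1 j).isLt; omega⟩ : Fin (m + 2)))),
         Fin.cons u q.2))
      ?_ ?_ ?_ ?_ ?_
    · -- forward maps into target
      intro p hp
      obtain ⟨hval, him, hsum, hbd, hw⟩ := fiber_facts hp
      rw [Finset.mem_filter, mem_chainSet] at hp
      obtain ⟨⟨h1, h2, h3, h4, h5⟩, -⟩ := hp
      rw [mem_chainSet]
      refine ⟨fun j => h1 j.succ, hsum, ?_, ?_, fun j => ?_⟩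
      · show p.2 (Fin.succ 0) = w
        rw [Fin.succ_zero_eq_one]; exact hw
      · show p.2 (Fin.last (k + 1)).succ = v
        rw [Fin.succ_last]; exact h4
      · show 0 < (M ^ (p.1 j.succ : ℕ)) (p.2 j.castSucc.succ) (p.2 j.succ.succ)
        have := h5 j.succ
        rwa [← Fin.succ_castSucc] at this
    · -- backward maps into source
      intro q hq
      rw [mem_chainSet] at hq
      obtain ⟨h1, h2, h3, h4, h5⟩ := hq
      rw [Finset.mem_filter, mem_chainSet]
      refine ⟨⟨fun j => ?_, ?_, ?_, ?_, fun j => ?_⟩, ?_⟩ <;> dsimp only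
      · induction j using Fin.cases with
        | zero => exact Nat.succ_le_succ (Nat.zero_le i)
        | succ j =>
          rw [Fin.cons_succ]
          exact h1 j
      · rw [Fin.sum_univ_succ]
        simp only [Fin.cons_zero, Fin.cons_succ]
        have : (∑ j : Fin (k + 1),
            ((⟨(q.1 j : ℕ), by have := (q.1 j).isLt; omega⟩ : Fin (m + 2)) : ℕ))
            = ∑ j : Fin (k + 1), (q.1 j : ℕ) := rfl
        rw [this, h2]
        show i + 1 + (m - 1 - i + 1) = m + 1
        omega
      · rw [Fin.cons_zero]
      · rw [← Fin.succ_last, Fin.cons_succ]; exact h4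
      · induction j using Fin.cases with
        | zero =>
          have e0 : Fin.castSucc (0 : Fin (k + 2)) = 0 := rfl
          rw [e0, Fin.cons_zero, Fin.cons_zero, Fin.cons_succ, h3]
          exact hc
        | succ j =>
          rw [← Fin.succ_castSucc, Fin.cons_succ, Fin.cons_succ, Fin.cons_succ]
          exact h5 j
      · rw [Prod.mk.injEq]
        refine ⟨by rw [Fin.cons_zero]; simp, ?_⟩
        have e1 : (1 : Fin (k + 3)) = Fin.succ 0 := rfl
        rw [e1, Fin.cons_succ, h3]
    · -- left inverse
      intro p hp
      obtain ⟨hval, him, hsum, hbd, hw⟩ := fiber_facts hp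
      have hp' := hp
      rw [Finset.mem_filter, mem_chainSet] at hp'
      refine Prod.ext ?_ ?_ <;> dsimp only
      · funext j
        induction j using Fin.cases with
        | zero =>
          rw [Fin.cons_zero]
          exact Fin.ext hval.symm
        | succ j =>
          rw [Fin.cons_succ]
      · funext j
        induction j using Fin.cases with
        | zero =>
          rw [Fin.cons_zero]
          exact hp'.1.2.2.1.symm
        | succ j =>
          rw [Fin.cons_succ]
    · -- right inverse
      intro q hq
      refine Prod.ext ?_ ?_ <;> dsimp only
      · funext j
        exact rfl
      · funext j
        rw [Fin.cons_succ]
    · -- weights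
      intro p hp
      obtain ⟨hval, him, hsum, hbd, hw⟩ := fiber_facts hp
      unfold chainWt
      rw [List.ofFn_succ, List.prod_cons]
      have h0 : (if (((0 : Fin (k + 2))) : ℕ) < k + 1 then vb else (1 : NCab)) = vb := by
        simp
      rw [h0]
      have hexp : ((p.1 0 : ℕ) - 1) = i := by omega
      rw [hexp, mul_assoc]
      congr 2
      refine congrArg List.prod (List.ofFn_inj.mpr (funext fun j => ?_))
      congr 1
      simp [Nat.add_lt_add_iff_right]
  · rw [if_neg hc, zero_mul]
    rw [Finset.sum_eq_zero]
    rintro p hp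
    exfalso
    obtain ⟨hval, him, hsum, hbd, hw⟩ := fiber_facts hp
    rw [Finset.mem_filter, mem_chainSet] at hp
    obtain ⟨⟨h1, h2, h3, h4, h5⟩, -⟩ := hp
    have := h5 0
    rw [hval] at this
    have e0 : (0 : Fin (k + 2)).castSucc = 0 := rfl
    have e1 : (0 : Fin (k + 2)).succ = 1 := rfl
    rw [e0, e1, h3, hw] at this
    exact hc this

lemma T_succ (M : Matrix V V ℕ) (m k : ℕ) (u v : V) :
    ∑ p ∈ chainSet M m (k + 1) u v, chainWt p
    = ∑ i ∈ Finset.range m, ∑ w : V,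
        (if 0 < (M ^ (i + 1)) u w then (va - vb) ^ i else 0) *
          (vb * ∑ q ∈ chainSet M (m - 1 - i) k w v, chainWt q) := by
  have hmaps : ∀ p ∈ chainSet M m (k + 1) u v,
      ((((p.1 0 : ℕ) - 1 : ℕ), p.2 1) : ℕ × V) ∈ Finset.range m ×ˢ Finset.univ := by
    intro p hp
    rw [mem_chainSet] at hp
    obtain ⟨h1, h2, -⟩ := hp
    rw [Fin.sum_univ_succ] at h2
    have htail : (k + 1) * 1 ≤ ∑ j : Fin (k + 1), (p.1 j.succ : ℕ) := by
      calc (k + 1) * 1 = ∑ _j : Fin (k + 1), 1 := by simp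
      _ ≤ _ := Finset.sum_le_sum fun j _ => h1 j.succ
    have hge := h1 0
    rw [Finset.mem_product, Finset.mem_range]
    exact ⟨by omega, Finset.mem_univ _⟩
  rw [← Finset.sum_fiberwise_of_maps_to hmaps chainWt, Finset.sum_product]
  refine Finset.sum_congr rfl fun i hi => Finset.sum_congr rfl fun w _ => ?_
  exact fiber_sum M m k u v w i (Finset.mem_range.mp hi)

lemma triple_apply (A : Matrix V V NCab) (c : NCab) (B : Matrix V V NCab) (u v : V) :
    (A * (c • (1 : Matrix V V NCab)) * B) u v = ∑ w, A u w * (c * B w v) := by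
  simp [Matrix.mul_apply, Matrix.smul_apply, Matrix.one_apply, mul_ite, mul_one, mul_zero,
    Finset.sum_ite_eq, mul_assoc]


/-- The matrix `Ψ` of `ab`-series of a level poset satisfies
`Ψ = K(a-b) · (I - b·K(a-b))⁻¹`, i.e. `Ψ = K(a-b) · ∑_{k≥0} (b·K(a-b))^k`, stated
degreewise: in particular each entry `Ψ_{x,y}` is a rational noncommutative power
series in `a` and `b`. -/
theorem psi_eq_K_mul_geom_inv (M : Matrix V V ℕ) (hbin : ∀ u v, M u v ≤ 1) :
    ∀ m : ℕ, PsiMat M m =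
      Kab M m + ∑ i ∈ Finset.range m,
        Kab M i * (vb • (1 : Matrix V V NCab)) * PsiMat M (m - 1 - i) := by
  intro m
  ext u v
  rw [Matrix.add_apply, Matrix.sum_apply]
  show (∑ k ∈ Finset.range (m + 1), ∑ p ∈ chainSet M m k u v, chainWt p) = _
  rw [Finset.sum_range_succ', T_zero, add_comm (Kab M m u v)]
  congr 1
  calc ∑ k ∈ Finset.range m, ∑ p ∈ chainSet M m (k + 1) u v, chainWt p
      = ∑ k ∈ Finset.range m, ∑ i ∈ Finset.range m, ∑ w : V,
          (if 0 < (M ^ (i + 1)) u w then (va - vb) ^ i else 0) *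
            (vb * ∑ q ∈ chainSet M (m - 1 - i) k w v, chainWt q) :=
        Finset.sum_congr rfl fun k _ => T_succ M m k u v
    _ = ∑ i ∈ Finset.range m, ∑ w : V,
          (if 0 < (M ^ (i + 1)) u w then (va - vb) ^ i else 0) *
            (vb * ∑ k ∈ Finset.range m, ∑ q ∈ chainSet M (m - 1 - i) k w v, chainWt q) := by
        rw [Finset.sum_comm]
        refine Finset.sum_congr rfl fun i _ => ?_
        rw [Finset.sum_comm]
        refine Finset.sum_congr rfl fun w _ => ?_
        symm
        rw [Finset.mul_sum]
        rw [Finset.mul_sum]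
    _ = ∑ i ∈ Finset.range m,
          (Kab M i * (vb • (1 : Matrix V V NCab)) * PsiMat M (m - 1 - i)) u v := by
        refine Finset.sum_congr rfl fun i hi => ?_
        rw [Finset.mem_range] at hi
        rw [triple_apply]
        refine Finset.sum_congr rfl fun w _ => ?_
        have hK : Kab M i u w = (if 0 < (M ^ (i + 1)) u w then (va - vb) ^ i else 0) := rfl
        have hP : PsiMat M (m - 1 - i) w v
            = ∑ k ∈ Finset.range m, ∑ q ∈ chainSet M (m - 1 - i) k w v, chainWt q := by
          show (∑ k ∈ Finset.range (m - 1 - i + 1), ∑ q ∈ chainSet M (m - 1 - i) k w v, chainWt q) = _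
          refine Finset.sum_subset ?_ ?_
          · exact Finset.range_subset_range.mpr (by omega)
          · intro k hk hk'
            rw [Finset.mem_range] at hk hk'
            rw [chainSet_eq_empty (by omega), Finset.sum_empty]
        rw [hK, hP]

end
end
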